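/- arXiv:1703.08642 — 3 statements merged into one kernel-verified Lean document; each statement's English description precedes it below -/
import Mathlib

section
/- Suppose that ‖P_{T_i} ∘ 𝒜_i* ∘ 𝒜_j ∘ P_{T_j}‖ ≤ 1/(10s) for all i ≠ j and ‖P_{T_i} ∘ 𝒜_i* ∘ 𝒜_i ∘ P_{T_i} − P_{T_i}‖ ≤ 1/(10s) for all i (operator norms of linear maps on ℂ^{K×N} equipped with the Frobenius norm). Then for every block-diagonal matrix Z = blkdiag(Z_1,…,Z_s) ∈ ℂ^{Ks×Ns}: | ‖𝒜(P_T(Z))‖² − ‖P_T(Z)‖_F² | ≤ (1/10)‖Z‖_F², where P_T(Z) = blkdiag(P_{T_1}(Z_1),…,P_{T_s}(Z_s)). -/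
noncomputable section
open Finset ComplexConjugate

namespace RGD

/-- Squared Euclidean norm of a complex vector. -/
def vnormSq {n : ℕ} (v : Fin n → ℂ) : ℝ := ∑ j, ‖v j‖ ^ 2

/-- Euclidean norm of a complex vector. -/
def vnorm {n : ℕ} (v : Fin n → ℂ) : ℝ := Real.sqrt (vnormSq v)

/-- Inner product, conjugate-linear in the first argument. -/
def vinner {n : ℕ} (u v : Fin n → ℂ) : ℂ := ∑ j, conj (u j) * v j

/-- Squared Frobenius norm of a matrix. -/
def frobSq {K N : ℕ} (Z : Matrix (Fin K) (Fin N) ℂ) : ℝ := ∑ k, ∑ j, ‖Z k j‖ ^ 2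

/-- Frobenius norm of a matrix. -/
def frob {K N : ℕ} (Z : Matrix (Fin K) (Fin N) ℂ) : ℝ := Real.sqrt (frobSq Z)

/-- Frobenius inner product `⟨U,V⟩ = Tr(U*V)`, conjugate-linear in the first argument. -/
def finner {K N : ℕ} (U V : Matrix (Fin K) (Fin N) ℂ) : ℂ := ∑ k, ∑ j, conj (U k j) * V k j

/-- Spectral (operator) norm of a matrix: sup of `‖Zv‖` over the closed unit ball. -/
def opNorm {K N : ℕ} (Z : Matrix (Fin K) (Fin N) ℂ) : ℝ :=
  sSup {r : ℝ | ∃ v : Fin N → ℂ, vnorm v ≤ 1 ∧ r = vnorm (Z.mulVec v)}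

/-- Squared Frobenius norm of a block-diagonal matrix, given by its diagonal blocks. -/
def famFrobSq {K N s : ℕ} (Z : Fin s → Matrix (Fin K) (Fin N) ℂ) : ℝ := ∑ i, frobSq (Z i)

/-- Frobenius norm of a block-diagonal matrix, given by its diagonal blocks. -/
def famFrob {K N s : ℕ} (Z : Fin s → Matrix (Fin K) (Fin N) ℂ) : ℝ := Real.sqrt (famFrobSq Z)

/-- The rank-one matrix `u v*`. -/
def rankOne {K N : ℕ} (u : Fin K → ℂ) (v : Fin N → ℂ) : Matrix (Fin K) (Fin N) ℂ :=
  Matrix.of fun k j => u k * conj (v j)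

/-- `ℋ(h,x)`: block-diagonal matrix with `i`-th block `hᵢ xᵢ*`. -/
def Hmap {K N s : ℕ} (h : Fin s → Fin K → ℂ) (x : Fin s → Fin N → ℂ) :
    Fin s → Matrix (Fin K) (Fin N) ℂ := fun i => rankOne (h i) (x i)

/-- `𝒜ᵢ(Z) = (bₗ* Z aₗ)ₗ`. -/
def calAi {K N L : ℕ} (b : Fin L → Fin K → ℂ) (a : Fin L → Fin N → ℂ)
    (Z : Matrix (Fin K) (Fin N) ℂ) : Fin L → ℂ :=
  fun l => vinner (b l) (Z.mulVec (a l))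

/-- `𝒜(Z) = Σᵢ 𝒜ᵢ(Zᵢ)` on block-diagonal matrices. -/
def calA {K N L s : ℕ} (b : Fin L → Fin K → ℂ) (a : Fin s → Fin L → Fin N → ℂ)
    (Z : Fin s → Matrix (Fin K) (Fin N) ℂ) : Fin L → ℂ :=
  fun l => ∑ i, calAi b (a i) (Z i) l

/-- `𝒜ᵢ*(z) = Σₗ zₗ bₗ aₗ*`. -/
def calAdj {K N L : ℕ} (b : Fin L → Fin K → ℂ) (a : Fin L → Fin N → ℂ)
    (z : Fin L → ℂ) : Matrix (Fin K) (Fin N) ℂ :=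
  Matrix.of fun k j => ∑ l, z l * b l k * conj (a l j)

/-- `‖𝒜*(e)‖ = maxᵢ ‖𝒜ᵢ*(e)‖` (operator norms). -/
def AadjNorm {K N L s : ℕ} (b : Fin L → Fin K → ℂ) (a : Fin s → Fin L → Fin N → ℂ)
    (e : Fin L → ℂ) : ℝ :=
  ⨆ i : Fin s, opNorm (calAdj b (a i) e)

/-- `B*B = I_K`, expressed in terms of the columns `bₗ` of `B*`. -/
def BtBeqI {K L : ℕ} (b : Fin L → Fin K → ℂ) : Prop :=
  ∀ k k' : Fin K, (∑ l, b l k * conj (b l k')) = if k = k' then (1 : ℂ) else 0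

/-- `μ ≥ μ_h`, i.e. `√L ‖B h_{i0}‖_∞ ≤ μ ‖h_{i0}‖` for all `i`. -/
def muhLe {K L s : ℕ} (b : Fin L → Fin K → ℂ) (h0 : Fin s → Fin K → ℂ) (μ : ℝ) : Prop :=
  ∀ i l, Real.sqrt L * ‖vinner (b l) (h0 i)‖ ≤ μ * vnorm (h0 i)

/-- `d₀ = √(Σᵢ d_{i0}²)`. -/
def dtot {s : ℕ} (d0 : Fin s → ℝ) : ℝ := Real.sqrt (∑ i, d0 i ^ 2)

/-- Condition number `κ = (maxᵢ d_{i0}) / (minᵢ d_{i0})`. -/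
def kappa {s : ℕ} (d0 : Fin s → ℝ) : ℝ := (⨆ i, d0 i) / (⨅ i, d0 i)

/-- The observation `y = 𝒜(ℋ(h₀,x₀)) + e`. -/
def yvec {K N L s : ℕ} (b : Fin L → Fin K → ℂ) (a : Fin s → Fin L → Fin N → ℂ)
    (h0 : Fin s → Fin K → ℂ) (x0 : Fin s → Fin N → ℂ) (e : Fin L → ℂ) : Fin L → ℂ :=
  fun l => calA b a (Hmap h0 x0) l + e l

/-- `F(h,x) = ‖𝒜(ℋ(h,x)) − y‖²`. -/
def Fobj {K N L s : ℕ} (b : Fin L → Fin K → ℂ) (a : Fin s → Fin L → Fin N → ℂ)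
    (h0 : Fin s → Fin K → ℂ) (x0 : Fin s → Fin N → ℂ) (e : Fin L → ℂ)
    (h : Fin s → Fin K → ℂ) (x : Fin s → Fin N → ℂ) : ℝ :=
  vnormSq (fun l => calA b a (Hmap h x) l - yvec b a h0 x0 e l)

def G0 (z : ℝ) : ℝ := max (z - 1) 0 ^ 2

def G0' (z : ℝ) : ℝ := 2 * max (z - 1) 0

/-- The `i`-th regularizer `Gᵢ(hᵢ,xᵢ)` (including the factor `ρ`). -/
def Gi {K N L : ℕ} (b : Fin L → Fin K → ℂ) (ρ μ di : ℝ)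
    (hi : Fin K → ℂ) (xi : Fin N → ℂ) : ℝ :=
  ρ * (G0 (vnormSq hi / (2 * di)) + G0 (vnormSq xi / (2 * di))
    + ∑ l, G0 ((L : ℝ) * ‖vinner (b l) hi‖ ^ 2 / (8 * di * μ ^ 2)))

/-- The regularizer `G(h,x) = Σᵢ Gᵢ(hᵢ,xᵢ)`. -/
def Greg {K N L s : ℕ} (b : Fin L → Fin K → ℂ) (ρ μ : ℝ) (dd : Fin s → ℝ)
    (h : Fin s → Fin K → ℂ) (x : Fin s → Fin N → ℂ) : ℝ :=
  ∑ i, Gi b ρ μ (dd i) (h i) (x i)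

/-- `F̃ = F + G`. -/
def Ftil {K N L s : ℕ} (b : Fin L → Fin K → ℂ) (a : Fin s → Fin L → Fin N → ℂ)
    (h0 : Fin s → Fin K → ℂ) (x0 : Fin s → Fin N → ℂ) (e : Fin L → ℂ)
    (ρ μ : ℝ) (dd : Fin s → ℝ)
    (h : Fin s → Fin K → ℂ) (x : Fin s → Fin N → ℂ) : ℝ :=
  Fobj b a h0 x0 e h x + Greg b ρ μ dd h x

/-- The residual `𝒜(ℋ(h,x)) − y`. -/
def residual {K N L s : ℕ} (b : Fin L → Fin K → ℂ) (a : Fin s → Fin L → Fin N → ℂ)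
    (h0 : Fin s → Fin K → ℂ) (x0 : Fin s → Fin N → ℂ) (e : Fin L → ℂ)
    (h : Fin s → Fin K → ℂ) (x : Fin s → Fin N → ℂ) : Fin L → ℂ :=
  fun l => calA b a (Hmap h x) l - yvec b a h0 x0 e l

/-- Wirtinger gradient `∇F_{hᵢ} = 𝒜ᵢ*(𝒜(ℋ(h,x)) − y) xᵢ`. -/
def gradFh {K N L s : ℕ} (b : Fin L → Fin K → ℂ) (a : Fin s → Fin L → Fin N → ℂ)
    (h0 : Fin s → Fin K → ℂ) (x0 : Fin s → Fin N → ℂ) (e : Fin L → ℂ)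
    (h : Fin s → Fin K → ℂ) (x : Fin s → Fin N → ℂ) (i : Fin s) : Fin K → ℂ :=
  (calAdj b (a i) (residual b a h0 x0 e h x)).mulVec (x i)

/-- Wirtinger gradient `∇F_{xᵢ} = (𝒜ᵢ*(𝒜(ℋ(h,x)) − y))* hᵢ`. -/
def gradFx {K N L s : ℕ} (b : Fin L → Fin K → ℂ) (a : Fin s → Fin L → Fin N → ℂ)
    (h0 : Fin s → Fin K → ℂ) (x0 : Fin s → Fin N → ℂ) (e : Fin L → ℂ)
    (h : Fin s → Fin K → ℂ) (x : Fin s → Fin N → ℂ) (i : Fin s) : Fin N → ℂ :=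
  (calAdj b (a i) (residual b a h0 x0 e h x)).conjTranspose.mulVec (h i)

/-- Wirtinger gradient `∇G_{hᵢ}`. -/
def gradGh {K L s : ℕ} (b : Fin L → Fin K → ℂ) (ρ μ : ℝ) (dd : Fin s → ℝ)
    (h : Fin s → Fin K → ℂ) (i : Fin s) : Fin K → ℂ :=
  fun k => ((ρ / (2 * dd i) : ℝ) : ℂ) *
    (((G0' (vnormSq (h i) / (2 * dd i)) : ℝ) : ℂ) * h i k
      + (((L : ℝ) / (4 * μ ^ 2) : ℝ) : ℂ) *
        ∑ l, ((G0' ((L : ℝ) * ‖vinner (b l) (h i)‖ ^ 2 / (8 * dd i * μ ^ 2)) : ℝ) : ℂ)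
          * (vinner (b l) (h i) * b l k))

/-- Wirtinger gradient `∇G_{xᵢ}`. -/
def gradGx {N s : ℕ} (ρ : ℝ) (dd : Fin s → ℝ)
    (x : Fin s → Fin N → ℂ) (i : Fin s) : Fin N → ℂ :=
  fun j => ((ρ / (2 * dd i) : ℝ) : ℂ) * (((G0' (vnormSq (x i) / (2 * dd i)) : ℝ) : ℂ) * x i j)

/-- `∇F̃_{hᵢ} = ∇F_{hᵢ} + ∇G_{hᵢ}`. -/
def gradH {K N L s : ℕ} (b : Fin L → Fin K → ℂ) (a : Fin s → Fin L → Fin N → ℂ)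
    (h0 : Fin s → Fin K → ℂ) (x0 : Fin s → Fin N → ℂ) (e : Fin L → ℂ)
    (ρ μ : ℝ) (dd : Fin s → ℝ)
    (h : Fin s → Fin K → ℂ) (x : Fin s → Fin N → ℂ) (i : Fin s) : Fin K → ℂ :=
  fun k => gradFh b a h0 x0 e h x i k + gradGh b ρ μ dd h i k

/-- `∇F̃_{xᵢ} = ∇F_{xᵢ} + ∇G_{xᵢ}`. -/
def gradX {K N L s : ℕ} (b : Fin L → Fin K → ℂ) (a : Fin s → Fin L → Fin N → ℂ)
    (h0 : Fin s → Fin K → ℂ) (x0 : Fin s → Fin N → ℂ) (e : Fin L → ℂ)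
    (ρ μ : ℝ) (dd : Fin s → ℝ)
    (h : Fin s → Fin K → ℂ) (x : Fin s → Fin N → ℂ) (i : Fin s) : Fin N → ℂ :=
  fun j => gradFx b a h0 x0 e h x i j + gradGx ρ dd x i j

/-- `‖∇F̃(h,x)‖²` (squared norm of the stacked Wirtinger gradient). -/
def gradNormSq {K N L s : ℕ} (b : Fin L → Fin K → ℂ) (a : Fin s → Fin L → Fin N → ℂ)
    (h0 : Fin s → Fin K → ℂ) (x0 : Fin s → Fin N → ℂ) (e : Fin L → ℂ)
    (ρ μ : ℝ) (dd : Fin s → ℝ)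
    (h : Fin s → Fin K → ℂ) (x : Fin s → Fin N → ℂ) : ℝ :=
  ∑ i, vnormSq (gradH b a h0 x0 e ρ μ dd h x i) + ∑ i, vnormSq (gradX b a h0 x0 e ρ μ dd h x i)

/-- `‖∇F̃(h',x') − ∇F̃(h,x)‖²`. -/
def gradDiffNormSq {K N L s : ℕ} (b : Fin L → Fin K → ℂ) (a : Fin s → Fin L → Fin N → ℂ)
    (h0 : Fin s → Fin K → ℂ) (x0 : Fin s → Fin N → ℂ) (e : Fin L → ℂ)
    (ρ μ : ℝ) (dd : Fin s → ℝ)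
    (h : Fin s → Fin K → ℂ) (x : Fin s → Fin N → ℂ)
    (h' : Fin s → Fin K → ℂ) (x' : Fin s → Fin N → ℂ) : ℝ :=
  ∑ i, vnormSq (fun k => gradH b a h0 x0 e ρ μ dd h' x' i k - gradH b a h0 x0 e ρ μ dd h x i k)
  + ∑ i, vnormSq (fun j => gradX b a h0 x0 e ρ μ dd h' x' i j - gradX b a h0 x0 e ρ μ dd h x i j)

/-- Membership in `𝒩_d`. -/
def inNd {K N s : ℕ} (d0 : Fin s → ℝ)
    (h : Fin s → Fin K → ℂ) (x : Fin s → Fin N → ℂ) : Prop :=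
  ∀ i, vnorm (h i) ≤ 2 * Real.sqrt (d0 i) ∧ vnorm (x i) ≤ 2 * Real.sqrt (d0 i)

/-- Membership in `𝒩_μ`. -/
def inNmu {K L s : ℕ} (b : Fin L → Fin K → ℂ) (d0 : Fin s → ℝ) (μ : ℝ)
    (h : Fin s → Fin K → ℂ) : Prop :=
  ∀ i, ∀ l, Real.sqrt L * ‖vinner (b l) (h i)‖ ≤ 4 * Real.sqrt (d0 i) * μ

/-- `δᵢ(hᵢ,xᵢ) = ‖hᵢxᵢ* − h_{i0}x_{i0}*‖_F / d_{i0}`. -/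
def deltaI {K N : ℕ} (h0i : Fin K → ℂ) (x0i : Fin N → ℂ) (d0i : ℝ)
    (hi : Fin K → ℂ) (xi : Fin N → ℂ) : ℝ :=
  frob (rankOne hi xi - rankOne h0i x0i) / d0i

/-- Membership in `𝒩_ε`. -/
def inNeps {K N s : ℕ} (h0 : Fin s → Fin K → ℂ) (x0 : Fin s → Fin N → ℂ)
    (d0 : Fin s → ℝ) (ε : ℝ)
    (h : Fin s → Fin K → ℂ) (x : Fin s → Fin N → ℂ) : Prop :=
  ∀ i, deltaI (h0 i) (x0 i) (d0 i) (h i) (x i) ≤ ε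

/-- The global relative error `δ(h,x) = ‖ℋ(h,x) − X₀‖_F / d₀`. -/
def deltaTot {K N s : ℕ} (h0 : Fin s → Fin K → ℂ) (x0 : Fin s → Fin N → ℂ)
    (d0 : Fin s → ℝ)
    (h : Fin s → Fin K → ℂ) (x : Fin s → Fin N → ℂ) : ℝ :=
  famFrob (fun i => Hmap h x i - Hmap h0 x0 i) / dtot d0

/-- Membership in `𝒩_F̃`. -/
def inNF {K N L s : ℕ} (b : Fin L → Fin K → ℂ) (a : Fin s → Fin L → Fin N → ℂ)
    (h0 : Fin s → Fin K → ℂ) (x0 : Fin s → Fin N → ℂ) (e : Fin L → ℂ)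
    (d0 : Fin s → ℝ) (ρ μ : ℝ) (dd : Fin s → ℝ) (ε : ℝ)
    (h : Fin s → Fin K → ℂ) (x : Fin s → Fin N → ℂ) : Prop :=
  Ftil b a h0 x0 e ρ μ dd h x ≤ ε ^ 2 * dtot d0 ^ 2 / (3 * (s : ℝ) * kappa d0 ^ 2) + vnormSq e

/-- The Local Restricted Isometry Property on `𝒩_d ∩ 𝒩_μ ∩ 𝒩_ε`. -/
def LocalRIP {K N L s : ℕ} (b : Fin L → Fin K → ℂ) (a : Fin s → Fin L → Fin N → ℂ)
    (h0 : Fin s → Fin K → ℂ) (x0 : Fin s → Fin N → ℂ)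
    (d0 : Fin s → ℝ) (μ ε : ℝ) : Prop :=
  ∀ (h : Fin s → Fin K → ℂ) (x : Fin s → Fin N → ℂ),
    inNd d0 h x → inNmu b d0 μ h → inNeps h0 x0 d0 ε h x →
      (2 / 3) * famFrobSq (fun i => Hmap h x i - Hmap h0 x0 i)
          ≤ vnormSq (calA b a fun i => Hmap h x i - Hmap h0 x0 i)
      ∧ vnormSq (calA b a fun i => Hmap h x i - Hmap h0 x0 i)
          ≤ (3 / 2) * famFrobSq (fun i => Hmap h x i - Hmap h0 x0 i)

/-- `α_{i1} = ⟨h_{i0}, hᵢ⟩ / d_{i0}`. -/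
def alpha1 {K s : ℕ} (h0 : Fin s → Fin K → ℂ) (d0 : Fin s → ℝ)
    (h : Fin s → Fin K → ℂ) (i : Fin s) : ℂ :=
  vinner (h0 i) (h i) / ((d0 i : ℝ) : ℂ)

/-- `α_{i2} = ⟨x_{i0}, xᵢ⟩ / d_{i0}`. -/
def alpha2 {N s : ℕ} (x0 : Fin s → Fin N → ℂ) (d0 : Fin s → ℝ)
    (x : Fin s → Fin N → ℂ) (i : Fin s) : ℂ :=
  vinner (x0 i) (x i) / ((d0 i : ℝ) : ℂ)

/-- `δ₀ = δ/10`. -/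
def delta0 {K N s : ℕ} (h0 : Fin s → Fin K → ℂ) (x0 : Fin s → Fin N → ℂ)
    (d0 : Fin s → ℝ) (h : Fin s → Fin K → ℂ) (x : Fin s → Fin N → ℂ) : ℝ :=
  deltaTot h0 x0 d0 h x / 10

/-- `αᵢ = (1−δ₀)α_{i1}` if `‖hᵢ‖ ≥ ‖xᵢ‖`, else `1/((1−δ₀) conj(α_{i2}))`. -/
def alphaC {K N s : ℕ} (h0 : Fin s → Fin K → ℂ) (x0 : Fin s → Fin N → ℂ)
    (d0 : Fin s → ℝ) (h : Fin s → Fin K → ℂ) (x : Fin s → Fin N → ℂ) (i : Fin s) : ℂ :=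
  if vnorm (x i) ≤ vnorm (h i)
  then ((1 - delta0 h0 x0 d0 h x : ℝ) : ℂ) * alpha1 h0 d0 h i
  else 1 / (((1 - delta0 h0 x0 d0 h x : ℝ) : ℂ) * conj (alpha2 x0 d0 x i))

/-- `Δhᵢ = hᵢ − αᵢ h_{i0}`. -/
def dh {K N s : ℕ} (h0 : Fin s → Fin K → ℂ) (x0 : Fin s → Fin N → ℂ)
    (d0 : Fin s → ℝ) (h : Fin s → Fin K → ℂ) (x : Fin s → Fin N → ℂ) (i : Fin s) :
    Fin K → ℂ :=
  fun k => h i k - alphaC h0 x0 d0 h x i * h0 i k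

/-- `Δxᵢ = xᵢ − conj(αᵢ)⁻¹ x_{i0}`. -/
def dx {K N s : ℕ} (h0 : Fin s → Fin K → ℂ) (x0 : Fin s → Fin N → ℂ)
    (d0 : Fin s → ℝ) (h : Fin s → Fin K → ℂ) (x : Fin s → Fin N → ℂ) (i : Fin s) :
    Fin N → ℂ :=
  fun j => x i j - (conj (alphaC h0 x0 d0 h x i))⁻¹ * x0 i j

/-- `σ²_max(h,x) = maxₗ Σᵢ |bₗ*hᵢ|² ‖xᵢ‖²`. -/
def sigmaMaxSq {K N L s : ℕ} (b : Fin L → Fin K → ℂ)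
    (h : Fin s → Fin K → ℂ) (x : Fin s → Fin N → ℂ) : ℝ :=
  ⨆ l : Fin L, ∑ i, ‖vinner (b l) (h i)‖ ^ 2 * vnormSq (x i)

/-- The rank-one bound (Lemma: `𝒜` on block-diagonal matrices with rank-1 blocks). -/
def RankOneBound {K N L s : ℕ} (b : Fin L → Fin K → ℂ)
    (a : Fin s → Fin L → Fin N → ℂ) : Prop :=
  ∀ (h : Fin s → Fin K → ℂ) (x : Fin s → Fin N → ℂ),
    vnormSq (calA b a (Hmap h x)) ≤
      4 / 3 * famFrobSq (Hmap h x)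
      + 2 * Real.sqrt (2 * (s : ℝ) * famFrobSq (Hmap h x) * sigmaMaxSq b h x
          * ((K : ℝ) + N) * Real.log L)
      + 8 * (s : ℝ) * sigmaMaxSq b h x * ((K : ℝ) + N) * Real.log L

/-- The subspace `Tᵢ = {h_{i0} v* + u x_{i0}*}`. -/
def Tspace {K N : ℕ} (h0i : Fin K → ℂ) (x0i : Fin N → ℂ) :
    Set (Matrix (Fin K) (Fin N) ℂ) :=
  {Z | ∃ (u : Fin K → ℂ) (v : Fin N → ℂ), Z = rankOne h0i v + rankOne u x0i}

/-- `P` is the orthogonal projection onto `Tᵢ` w.r.t. the Frobenius inner product. -/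
def IsFrobProj {K N : ℕ} (h0i : Fin K → ℂ) (x0i : Fin N → ℂ)
    (P : Matrix (Fin K) (Fin N) ℂ → Matrix (Fin K) (Fin N) ℂ) : Prop :=
  ∀ Z, P Z ∈ Tspace h0i x0i ∧ ∀ W ∈ Tspace h0i x0i, finner W (Z - P Z) = 0

/-- Operator norm of `𝒜ᵢ` from `(ℂ^{K×N}, ‖·‖_F)` to `(ℂ^L, ‖·‖)`. -/
def calAiOpNorm {K N L : ℕ} (b : Fin L → Fin K → ℂ) (a : Fin L → Fin N → ℂ) : ℝ :=
  sSup {r : ℝ | ∃ Z : Matrix (Fin K) (Fin N) ℂ, frob Z ≤ 1 ∧ r = vnorm (calAi b a Z)}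

/-- Operator norm of `𝒜` from block-diagonal matrices with `‖·‖_F` to `ℂ^L`. -/
def calAOpNorm {K N L s : ℕ} (b : Fin L → Fin K → ℂ)
    (a : Fin s → Fin L → Fin N → ℂ) : ℝ :=
  sSup {r : ℝ | ∃ Z : Fin s → Matrix (Fin K) (Fin N) ℂ, famFrob Z ≤ 1 ∧ r = vnorm (calA b a Z)}

/-- Norm of a stacked vector in `ℂ^{ns}`. -/
def stackNorm {n s : ℕ} (u : Fin s → Fin n → ℂ) : ℝ := Real.sqrt (∑ i, vnormSq (u i))

/-- Norm of a point `z = (h,x) ∈ ℂ^{s(K+N)}`. -/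
def pairNorm {K N s : ℕ} (u : Fin s → Fin K → ℂ) (v : Fin s → Fin N → ℂ) : ℝ :=
  Real.sqrt (∑ i, vnormSq (u i) + ∑ i, vnormSq (v i))

/-- `z + t • w` componentwise, `t` real. -/
def shiftV {n s : ℕ} (u w : Fin s → Fin n → ℂ) (t : ℝ) : Fin s → Fin n → ℂ :=
  fun i k => u i k + (t : ℂ) * w i k

/-- `σ_max(h) = maxₗ √(Σᵢ |bₗ*hᵢ|²)` (unit `xᵢ`'s). -/
def sigmaMaxU {K L s : ℕ} (b : Fin L → Fin K → ℂ) (h : Fin s → Fin K → ℂ) : ℝ :=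
  ⨆ l, Real.sqrt (∑ i, ‖vinner (b l) (h i)‖ ^ 2)

/-! With `Wᵢ = Pᵢ Zᵢ ∈ Tᵢ`, self-adjointness of `Pᵢ` on `Tᵢ` gives
`‖𝒜(W)‖² − ‖W‖_F² = Σᵢⱼ Re ⟨Wᵢ, Pᵢ𝒜ᵢ*𝒜ⱼWⱼ − δᵢⱼ Wⱼ⟩`. By the hypotheses each term is at most
`‖Zᵢ‖_F ‖Zⱼ‖_F / (10s)`, and `(Σᵢ ‖Zᵢ‖_F)² ≤ s Σᵢ ‖Zᵢ‖_F²`. -/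

/-- `vec Z`, under which `finner` and `frob` become the Euclidean inner product and norm. -/
def toL2 {K N : ℕ} (Z : Matrix (Fin K) (Fin N) ℂ) : EuclideanSpace ℂ (Fin K × Fin N) :=
  WithLp.toLp 2 fun p => Z p.1 p.2

section Frobenius

variable {K N : ℕ}

lemma finner_eq_inner_toL2 (U V : Matrix (Fin K) (Fin N) ℂ) :
    finner U V = inner ℂ (toL2 U) (toL2 V) := by
  simp only [finner, toL2, PiLp.inner_apply, RCLike.inner_apply, Fintype.sum_prod_type]
  exact sum_congr rfl fun _ _ => sum_congr rfl fun _ _ => mul_comm _ _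

lemma frobSq_eq_norm_toL2_sq (Z : Matrix (Fin K) (Fin N) ℂ) : frobSq Z = ‖toL2 Z‖ ^ 2 := by
  rw [EuclideanSpace.norm_eq, Real.sq_sqrt (by positivity)]
  simp [frobSq, toL2, Fintype.sum_prod_type]

lemma frob_eq_norm_toL2 (Z : Matrix (Fin K) (Fin N) ℂ) : frob Z = ‖toL2 Z‖ := by
  rw [frob, frobSq_eq_norm_toL2_sq, Real.sqrt_sq (norm_nonneg _)]

lemma frob_nonneg (Z : Matrix (Fin K) (Fin N) ℂ) : 0 ≤ frob Z :=
  Real.sqrt_nonneg _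

lemma frobSq_eq_frob_sq (Z : Matrix (Fin K) (Fin N) ℂ) : frobSq Z = frob Z ^ 2 := by
  rw [frob_eq_norm_toL2, frobSq_eq_norm_toL2_sq]

lemma frobSq_eq_re_finner (Z : Matrix (Fin K) (Fin N) ℂ) : frobSq Z = (finner Z Z).re := by
  rw [finner_eq_inner_toL2, frobSq_eq_norm_toL2_sq]
  exact (inner_self_eq_norm_sq (𝕜 := ℂ) _).symm

lemma norm_finner_le (U V : Matrix (Fin K) (Fin N) ℂ) : ‖finner U V‖ ≤ frob U * frob V := by
  rw [finner_eq_inner_toL2, frob_eq_norm_toL2, frob_eq_norm_toL2]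
  exact norm_inner_le_norm _ _

lemma toL2_sub (X Y : Matrix (Fin K) (Fin N) ℂ) : toL2 (X - Y) = toL2 X - toL2 Y := rfl

lemma finner_sub_right (U X Y : Matrix (Fin K) (Fin N) ℂ) :
    finner U (X - Y) = finner U X - finner U Y := by
  simp only [finner_eq_inner_toL2, toL2_sub, inner_sub_right]

end Frobenius

namespace IsFrobProj

variable {K N : ℕ} {h0i : Fin K → ℂ} {x0i : Fin N → ℂ}
  {P : Matrix (Fin K) (Fin N) ℂ → Matrix (Fin K) (Fin N) ℂ}

lemma finner_map_right (hP : IsFrobProj h0i x0i P) {W : Matrix (Fin K) (Fin N) ℂ}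
    (hW : W ∈ Tspace h0i x0i) (X : Matrix (Fin K) (Fin N) ℂ) :
    finner W (P X) = finner W X := by
  have horth := (hP X).2 W hW
  rw [finner_sub_right, sub_eq_zero] at horth
  exact horth.symm

lemma frob_map_le (hP : IsFrobProj h0i x0i P) (Z : Matrix (Fin K) (Fin N) ℂ) :
    frob (P Z) ≤ frob Z := by
  have horth : inner ℂ (toL2 (P Z)) (toL2 Z - toL2 (P Z)) = 0 := by
    rw [← toL2_sub, ← finner_eq_inner_toL2]
    exact (hP Z).2 (P Z) (hP Z).1
  have hpyth := norm_add_sq_eq_norm_sq_add_norm_sq_of_inner_eq_zero _ _ horth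
  rw [add_sub_cancel] at hpyth
  rw [frob_eq_norm_toL2, frob_eq_norm_toL2]
  exact (mul_self_le_mul_self_iff (norm_nonneg _) (norm_nonneg _)).2
    (hpyth ▸ le_add_of_nonneg_right (mul_self_nonneg _))

lemma abs_re_finner_map_le (hP : IsFrobProj h0i x0i P) (Z X : Matrix (Fin K) (Fin N) ℂ) :
    |(finner (P Z) X).re| ≤ frob Z * frob X :=
  (Complex.abs_re_le_norm _).trans <| (norm_finner_le _ _).trans <|
    mul_le_mul_of_nonneg_right (hP.frob_map_le Z) (frob_nonneg X)

end IsFrobProj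

section Measurement

variable {K N L s : ℕ}

lemma vnormSq_eq_re_vinner {n : ℕ} (v : Fin n → ℂ) : vnormSq v = (vinner v v).re := by
  simp only [vnormSq, vinner, Complex.conj_mul', Complex.re_sum]
  norm_cast

lemma vinner_sum_sum {n : ℕ} (c : Fin s → Fin n → ℂ) :
    vinner (fun l => ∑ i, c i l) (fun l => ∑ j, c j l) = ∑ i, ∑ j, vinner (c i) (c j) := by
  simp only [vinner, map_sum, sum_mul, mul_sum]
  exact (sum_comm.trans (sum_congr rfl fun _ _ => sum_comm)).trans sum_comm

lemma vinner_calAi (b : Fin L → Fin K → ℂ) (a : Fin L → Fin N → ℂ)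
    (W : Matrix (Fin K) (Fin N) ℂ) (z : Fin L → ℂ) :
    vinner (calAi b a W) z = finner W (calAdj b a z) := by
  simp only [vinner, calAi, finner, calAdj, Matrix.mulVec, dotProduct,
    Matrix.of_apply, map_sum, map_mul, Complex.conj_conj, sum_mul, mul_sum]
  rw [sum_comm]
  refine sum_congr rfl fun _ _ => ?_
  rw [sum_comm]
  exact sum_congr rfl fun _ _ => sum_congr rfl fun _ _ => by ring

lemma vnormSq_calA (b : Fin L → Fin K → ℂ) (a : Fin s → Fin L → Fin N → ℂ)
    (W : Fin s → Matrix (Fin K) (Fin N) ℂ) :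
    vnormSq (calA b a W) = ∑ i, ∑ j, (finner (W i) (calAdj b (a i) (calAi b (a j) (W j)))).re := by
  rw [vnormSq_eq_re_vinner]
  unfold calA
  rw [vinner_sum_sum, Complex.re_sum]
  simp only [vinner_calAi, Complex.re_sum]

end Measurement

lemma abs_sum_sum_le_card_mul_sum_sq {ι : Type*} [Fintype ι] {t : ι → ι → ℝ} {f : ι → ℝ}
    {c : ℝ} (hc : 0 ≤ c) (ht : ∀ i j, |t i j| ≤ c * (f i * f j)) :
    |∑ i, ∑ j, t i j| ≤ c * Fintype.card ι * ∑ i, f i ^ 2 :=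
  calc |∑ i, ∑ j, t i j| ≤ ∑ i, ∑ j, |t i j| :=
        (abs_sum_le_sum_abs _ _).trans (sum_le_sum fun _ _ => abs_sum_le_sum_abs _ _)
    _ ≤ ∑ i, ∑ j, c * (f i * f j) := sum_le_sum fun i _ => sum_le_sum fun j _ => ht i j
    _ = c * (∑ i, f i) ^ 2 := by rw [sq, sum_mul_sum, mul_sum]; simp only [mul_sum]
    _ ≤ c * (Fintype.card ι * ∑ i, f i ^ 2) :=
        mul_le_mul_of_nonneg_left (sq_sum_le_card_mul_sum_sq ..) hc
    _ = c * Fintype.card ι * ∑ i, f i ^ 2 := by ring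

theorem statement9_general
    {K N L s : ℕ}
    (b : Fin L → Fin K → ℂ)
    (a : Fin s → Fin L → Fin N → ℂ)
    (h0 : Fin s → Fin K → ℂ) (x0 : Fin s → Fin N → ℂ)
    (P : Fin s → Matrix (Fin K) (Fin N) ℂ → Matrix (Fin K) (Fin N) ℂ)
    (hP : ∀ i, IsFrobProj (h0 i) (x0 i) (P i))
    (hoff : ∀ i j, i ≠ j → ∀ Z : Matrix (Fin K) (Fin N) ℂ,
      frob (P i (calAdj b (a i) (calAi b (a j) (P j Z)))) ≤ 1 / (10 * (s : ℝ)) * frob Z)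
    (hdiag : ∀ i, ∀ Z : Matrix (Fin K) (Fin N) ℂ,
      frob (P i (calAdj b (a i) (calAi b (a i) (P i Z))) - P i Z)
        ≤ 1 / (10 * (s : ℝ)) * frob Z) :
    ∀ Z : Fin s → Matrix (Fin K) (Fin N) ℂ,
      |vnormSq (calA b a fun i => P i (Z i)) - famFrobSq (fun i => P i (Z i))|
        ≤ 1 / 10 * famFrobSq Z := by
  intro Z
  set c : ℝ := 1 / (10 * (s : ℝ))
  set W := fun i => P i (Z i)
  set E := fun i j => P i (calAdj b (a i) (calAi b (a j) (W j))) - if i = j then W j else 0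
  have hE : ∀ i j, frob (E i j) ≤ c * frob (Z j) := by
    intro i j
    by_cases hij : i = j
    · subst hij; simpa [E] using hdiag i (Z i)
    · simpa [E, hij] using hoff i j hij (Z j)
  have hterm : ∀ i j, (finner (W i) (calAdj b (a i) (calAi b (a j) (W j)))).re
      - (if i = j then frobSq (W i) else 0) = (finner (W i) (E i j)).re := by
    intro i j
    by_cases hij : i = j
    · subst hij
      simp [E, W, finner_sub_right, (hP i).finner_map_right (hP i (Z i)).1, frobSq_eq_re_finner]
    · simp [E, W, hij, (hP i).finner_map_right (hP i (Z i)).1]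
  have hsplit : vnormSq (calA b a W) - famFrobSq W = ∑ i, ∑ j, (finner (W i) (E i j)).re := by
    simp only [← hterm, sum_sub_distrib, sum_ite_eq, mem_univ, if_true, vnormSq_calA, famFrobSq]
  have hcs : c * s ≤ 1 / 10 := calc
    c * s = 1 / 10 * (s / s) := by ring
    _ ≤ 1 / 10 := mul_le_of_le_one_right (by norm_num) (div_self_le_one _)
  calc |vnormSq (calA b a W) - famFrobSq W|
      ≤ c * Fintype.card (Fin s) * ∑ i, frob (Z i) ^ 2 := by
        rw [hsplit]
        refine abs_sum_sum_le_card_mul_sum_sq (by positivity) fun i j => ?_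
        exact ((hP i).abs_re_finner_map_le (Z i) (E i j)).trans <|
          (mul_le_mul_of_nonneg_left (hE i j) (frob_nonneg _)).trans_eq (by ring)
    _ ≤ 1 / 10 * famFrobSq Z := by
        rw [Fintype.card_fin, famFrobSq]
        simp only [frobSq_eq_frob_sq]
        exact mul_le_mul_of_nonneg_right hcs (by positivity)

/-- restricted isometry of `𝒜` on `T`. -/
theorem statement9
    {K N L s : ℕ} (hK : 0 < K) (hN : 0 < N) (hL : 0 < L) (hs : 0 < s)
    (b : Fin L → Fin K → ℂ)
    (a : Fin s → Fin L → Fin N → ℂ)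
    (h0 : Fin s → Fin K → ℂ) (x0 : Fin s → Fin N → ℂ)
    (d0 : Fin s → ℝ) (hd0 : ∀ i, 0 < d0 i)
    (hh0 : ∀ i, vnorm (h0 i) = Real.sqrt (d0 i))
    (hx0 : ∀ i, vnorm (x0 i) = Real.sqrt (d0 i))
    (P : Fin s → Matrix (Fin K) (Fin N) ℂ → Matrix (Fin K) (Fin N) ℂ)
    (hP : ∀ i, IsFrobProj (h0 i) (x0 i) (P i))
    (hoff : ∀ i j, i ≠ j → ∀ Z : Matrix (Fin K) (Fin N) ℂ,
      frob (P i (calAdj b (a i) (calAi b (a j) (P j Z)))) ≤ 1 / (10 * (s : ℝ)) * frob Z)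
    (hdiag : ∀ i, ∀ Z : Matrix (Fin K) (Fin N) ℂ,
      frob (P i (calAdj b (a i) (calAi b (a i) (P i Z))) - P i Z)
        ≤ 1 / (10 * (s : ℝ)) * frob Z) :
    ∀ Z : Fin s → Matrix (Fin K) (Fin N) ℂ,
      |vnormSq (calA b a fun i => P i (Z i)) - famFrobSq (fun i => P i (Z i))|
        ≤ 1 / 10 * famFrobSq Z :=
  statement9_general b a h0 x0 P hP hoff hdiag

end RGD
end
end

section
/- There exists a universal constant C > 0 such that the following holds. Assume μ ≥ μ_h, 0 < ε ≤ 1/15, and L ≥ C·μ²·s·(K+N)·(log L)². Suppose (i) |‖𝒜(P_T(Z))‖² − ‖P_T(Z)‖_F²| ≤ (1/10)‖Z‖_F² for every block-diagonal Z, and (ii) the rank-one bound holds: ‖𝒜(ℋ(h,x))‖² ≤ (4/3)‖ℋ(h,x)‖_F² + 2√(2s‖ℋ(h,x)‖_F²·σ_max²(h,x)·(K+N)·log L) + 8s·σ_max²(h,x)·(K+N)·log L for all h ∈ ℂ^{Ks}, x ∈ ℂ^{Ns}. Then (2/3)‖ℋ(h,x) − X_0‖_F² ≤ ‖𝒜(ℋ(h,x)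 − X_0)‖² ≤ (3/2)‖ℋ(h,x) − X_0‖_F² uniformly for all (h,x) ∈ 𝒩_d ∩ 𝒩_μ ∩ 𝒩_ε. -/
noncomputable section
open Finset ComplexConjugate

namespace RGD

/-!
Write each block of `ℋ(h,x) − X₀` as `hᵢxᵢ* − h_{i0}x_{i0}* = Uᵢ + Δhᵢ Δxᵢ*` with
`αᵢ = ⟨h_{i0}, hᵢ⟩ / d_{i0}`, `Δhᵢ = hᵢ − αᵢ h_{i0}`, `Δxᵢ = xᵢ − conj(αᵢ)⁻¹ x_{i0}` and `Uᵢ ∈ Tᵢ`.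
Since `Δhᵢ ⊥ h_{i0}`, Pythagoras and `δᵢ ≤ 1/15` make the rank-one remainder `Δhᵢ Δxᵢ*` at most
`1/28` of the block in Frobenius norm, while `Δhᵢ` stays `6μ`-incoherent; the rank-one bound and
`L ≳ μ² s (K+N) log² L` then give `‖𝒜(ℋ(Δh,Δx))‖² ≤ 0.006 ‖ℋ(h,x) − X₀‖_F²`. On the tangent part
`𝒜` is an isometry up to `1/10`, and the triangle inequality yields the constants `2/3` and `3/2`.
-/

section Norms

variable {n K N L s : ℕ}

lemma vnormSq_nonneg (v : Fin n → ℂ) : 0 ≤ vnormSq v := by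
  unfold vnormSq; positivity

lemma vnorm_sq (v : Fin n → ℂ) : vnorm v ^ 2 = vnormSq v := Real.sq_sqrt (vnormSq_nonneg v)

lemma vnorm_eq_norm_toLp (v : Fin n → ℂ) :
    vnorm v = ‖(WithLp.toLp 2 v : EuclideanSpace ℂ (Fin n))‖ := by
  rw [EuclideanSpace.norm_eq]; rfl

lemma vinner_eq_inner_toLp (u v : Fin n → ℂ) :
    vinner u v = inner ℂ (WithLp.toLp 2 u : EuclideanSpace ℂ (Fin n)) (WithLp.toLp 2 v) := by
  simp [vinner, PiLp.inner_apply, mul_comm]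

lemma vnorm_nonneg (v : Fin n → ℂ) : 0 ≤ vnorm v := Real.sqrt_nonneg _

lemma vnorm_add_le (u v : Fin n → ℂ) : vnorm (u + v) ≤ vnorm u + vnorm v := by
  simp only [vnorm_eq_norm_toLp, WithLp.toLp_add]; exact norm_add_le _ _

lemma vnorm_sub_le (u v : Fin n → ℂ) : vnorm (u - v) ≤ vnorm u + vnorm v := by
  simp only [vnorm_eq_norm_toLp, WithLp.toLp_sub]; exact norm_sub_le _ _

lemma vnorm_smul (c : ℂ) (v : Fin n → ℂ) : vnorm (c • v) = ‖c‖ * vnorm v := by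
  simp only [vnorm_eq_norm_toLp, WithLp.toLp_smul, norm_smul]

lemma norm_vinner_le (u v : Fin n → ℂ) : ‖vinner u v‖ ≤ vnorm u * vnorm v := by
  rw [vinner_eq_inner_toLp, vnorm_eq_norm_toLp, vnorm_eq_norm_toLp]
  exact norm_inner_le_norm _ _

lemma vinner_self (v : Fin n → ℂ) : vinner v v = (vnormSq v : ℂ) := by
  simp only [vinner, vnormSq, Complex.ofReal_sum, Complex.ofReal_pow, RCLike.conj_mul]; rfl

lemma vinner_sub_smul (u v w : Fin n → ℂ) (c : ℂ) :
    vinner u (v - c • w) = vinner u v - c * vinner u w := by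
  simp only [vinner_eq_inner_toLp, WithLp.toLp_sub, WithLp.toLp_smul, inner_sub_right,
    inner_smul_right]

lemma conj_vinner (u v : Fin n → ℂ) : conj (vinner u v) = vinner v u := by
  simp only [vinner_eq_inner_toLp, inner_conj_symm]

lemma frobSq_nonneg (Z : Matrix (Fin K) (Fin N) ℂ) : 0 ≤ frobSq Z := by
  unfold frobSq; positivity

lemma frob_sq (Z : Matrix (Fin K) (Fin N) ℂ) : frob Z ^ 2 = frobSq Z :=
  Real.sq_sqrt (frobSq_nonneg Z)

abbrev toEuclidean (Z : Matrix (Fin K) (Fin N) ℂ) : EuclideanSpace ℂ (Fin K × Fin N) :=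
  WithLp.toLp 2 fun p => Z p.1 p.2

lemma frob_eq_norm_toEuclidean (Z : Matrix (Fin K) (Fin N) ℂ) : frob Z = ‖toEuclidean Z‖ := by
  rw [EuclideanSpace.norm_eq, Fintype.sum_prod_type]; rfl

lemma finner_eq_inner_toEuclidean (U V : Matrix (Fin K) (Fin N) ℂ) :
    finner U V = inner ℂ (toEuclidean U) (toEuclidean V) := by
  simp [finner, PiLp.inner_apply, Fintype.sum_prod_type, mul_comm]

lemma frobSq_rankOne (u : Fin K → ℂ) (v : Fin N → ℂ) :
    frobSq (rankOne u v) = vnormSq u * vnormSq v := by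
  simp only [frobSq, vnormSq, Finset.sum_mul_sum, rankOne, Matrix.of_apply, norm_mul, mul_pow,
    RCLike.norm_conj]

lemma frob_rankOne (u : Fin K → ℂ) (v : Fin N → ℂ) :
    frob (rankOne u v) = vnorm u * vnorm v := by
  rw [frob, frobSq_rankOne, vnorm, vnorm, Real.sqrt_mul (vnormSq_nonneg u)]

lemma finner_rankOne (u u' : Fin K → ℂ) (v v' : Fin N → ℂ) :
    finner (rankOne u v) (rankOne u' v') = vinner u u' * conj (vinner v v') := by
  simp only [finner, vinner, map_sum, Finset.sum_mul_sum, rankOne, Matrix.of_apply, map_mul,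
    Complex.conj_conj]
  exact Finset.sum_congr rfl fun _ _ => Finset.sum_congr rfl fun _ _ => by ring

lemma frobSq_rankOne_add_rankOne {u u' : Fin K → ℂ} (huu' : vinner u u' = 0) (v v' : Fin N → ℂ) :
    frobSq (rankOne u v + rankOne u' v') = vnormSq u * vnormSq v + vnormSq u' * vnormSq v' := by
  have horth : inner ℂ (toEuclidean (rankOne u v)) (toEuclidean (rankOne u' v')) = 0 := by
    rw [← finner_eq_inner_toEuclidean, finner_rankOne, huu', zero_mul]
  have hsum : toEuclidean (rankOne u v + rankOne u' v') =
      toEuclidean (rankOne u v) + toEuclidean (rankOne u' v') := rfl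
  have := norm_add_sq_eq_norm_sq_add_norm_sq_of_inner_eq_zero _ _ horth
  simp only [← hsum, ← frob_eq_norm_toEuclidean, ← sq, frob_sq, frobSq_rankOne] at this
  exact this

lemma eq_zero_of_finner_self_eq_zero {Z : Matrix (Fin K) (Fin N) ℂ} (hZ : finner Z Z = 0) :
    Z = 0 := by
  rw [finner_eq_inner_toEuclidean, inner_self_eq_zero] at hZ
  ext k j
  exact congrFun (congrArg WithLp.ofLp hZ) (k, j)

lemma famFrobSq_nonneg (Z : Fin s → Matrix (Fin K) (Fin N) ℂ) : 0 ≤ famFrobSq Z :=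
  Finset.sum_nonneg fun i _ => frobSq_nonneg (Z i)

lemma famFrob_sq (Z : Fin s → Matrix (Fin K) (Fin N) ℂ) : famFrob Z ^ 2 = famFrobSq Z :=
  Real.sq_sqrt (famFrobSq_nonneg Z)

abbrev famToEuclidean (Z : Fin s → Matrix (Fin K) (Fin N) ℂ) :
    EuclideanSpace ℂ (Fin s × Fin K × Fin N) :=
  WithLp.toLp 2 fun p => Z p.1 p.2.1 p.2.2

lemma famFrob_eq_norm_famToEuclidean (Z : Fin s → Matrix (Fin K) (Fin N) ℂ) :
    famFrob Z = ‖famToEuclidean Z‖ := by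
  simp only [EuclideanSpace.norm_eq, Fintype.sum_prod_type]; rfl

lemma famFrob_add_le (U V : Fin s → Matrix (Fin K) (Fin N) ℂ) :
    famFrob (U + V) ≤ famFrob U + famFrob V := by
  simp only [famFrob_eq_norm_famToEuclidean]
  exact norm_add_le (famToEuclidean U) (famToEuclidean V)

lemma famFrob_sub_le (U V : Fin s → Matrix (Fin K) (Fin N) ℂ) :
    famFrob (U - V) ≤ famFrob U + famFrob V := by
  simp only [famFrob_eq_norm_famToEuclidean]
  exact norm_sub_le (famToEuclidean U) (famToEuclidean V)

lemma calA_add (b : Fin L → Fin K → ℂ) (a : Fin s → Fin L → Fin N → ℂ)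
    (U V : Fin s → Matrix (Fin K) (Fin N) ℂ) : calA b a (U + V) = calA b a U + calA b a V := by
  ext l
  simp only [calA, calAi, vinner, Pi.add_apply, Matrix.add_mulVec, mul_add,
    Finset.sum_add_distrib]

end Norms

section TangentSpace

variable {K N : ℕ} {h0 : Fin K → ℂ} {x0 : Fin N → ℂ}

lemma sub_mem_Tspace {X Y : Matrix (Fin K) (Fin N) ℂ} (hX : X ∈ Tspace h0 x0)
    (hY : Y ∈ Tspace h0 x0) : X - Y ∈ Tspace h0 x0 := by
  obtain ⟨u, v, rfl⟩ := hX
  obtain ⟨u', v', rfl⟩ := hY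
  refine ⟨u - u', v - v', ?_⟩
  ext k j
  simp only [rankOne, Matrix.sub_apply, Matrix.add_apply, Matrix.of_apply, Pi.sub_apply, map_sub]
  ring

lemma IsFrobProj.apply_of_mem {P : Matrix (Fin K) (Fin N) ℂ → Matrix (Fin K) (Fin N) ℂ}
    (hP : IsFrobProj h0 x0 P) {W : Matrix (Fin K) (Fin N) ℂ} (hW : W ∈ Tspace h0 x0) :
    P W = W := by
  obtain ⟨hPW, horth⟩ := hP W
  exact (sub_eq_zero.1 (eq_zero_of_finner_self_eq_zero (horth _ (sub_mem_Tspace hW hPW)))).symm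

end TangentSpace

section Block

variable {K N : ℕ} {d : ℝ} {h0 hi : Fin K → ℂ} {x0 xi : Fin N → ℂ} {α : ℂ}

lemma rankOne_sub_rankOne_eq (α : ℂ) (hi h0 : Fin K → ℂ) (xi x0 : Fin N → ℂ) :
    rankOne hi xi - rankOne h0 x0 =
      rankOne (hi - α • h0) xi + rankOne h0 (conj α • xi - x0) := by
  ext k j
  simp only [rankOne, Matrix.sub_apply, Matrix.add_apply, Matrix.of_apply, Pi.sub_apply,
    Pi.smul_apply, smul_eq_mul, map_sub, map_mul, Complex.conj_conj]
  ring

lemma rankOne_sub_rankOne_sub_mem_Tspace (hα : α ≠ 0) :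
    rankOne hi xi - rankOne h0 x0 - rankOne (hi - α • h0) (xi - (conj α)⁻¹ • x0) ∈
      Tspace h0 x0 := by
  refine ⟨α⁻¹ • hi - h0, conj α • xi - x0, ?_⟩
  ext k j
  simp only [rankOne, Matrix.sub_apply, Matrix.add_apply, Matrix.of_apply, Pi.sub_apply,
    Pi.smul_apply, smul_eq_mul, map_sub, map_mul, map_inv₀, Complex.conj_conj]
  field_simp
  ring

lemma frobSq_rankOne_sub_rankOne (hh0 : vnormSq h0 = d) (hd : d ≠ 0)
    (hα : α = vinner h0 hi / d) :
    frobSq (rankOne hi xi - rankOne h0 x0) =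
      vnormSq (hi - α • h0) * vnormSq xi + d * vnormSq (conj α • xi - x0) := by
  have hdC : (d : ℂ) ≠ 0 := Complex.ofReal_ne_zero.2 hd
  have horth : vinner (hi - α • h0) h0 = 0 := by
    rw [← conj_vinner, vinner_sub_smul, vinner_self, hh0, hα, div_mul_cancel₀ _ hdC, sub_self,
      map_zero]
  rw [rankOne_sub_rankOne_eq α, frobSq_rankOne_add_rankOne horth, hh0]

lemma vnorm_le_norm_mul_vnorm_add (α : ℂ) (xi x0 : Fin N → ℂ) :
    vnorm x0 ≤ ‖α‖ * vnorm xi + vnorm (conj α • xi - x0) := by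
  have := vnorm_sub_le (conj α • xi) (conj α • xi - x0)
  rwa [sub_sub_cancel, vnorm_smul, RCLike.norm_conj] at this

lemma vnorm_sub_inv_conj_smul_mul_norm (hα : α ≠ 0) (xi x0 : Fin N → ℂ) :
    vnorm (xi - (conj α)⁻¹ • x0) * ‖α‖ = vnorm (conj α • xi - x0) := by
  have : xi - (conj α)⁻¹ • x0 = (conj α)⁻¹ • (conj α • xi - x0) := by
    rw [smul_sub, smul_smul, inv_mul_cancel₀ ((map_ne_zero _).2 hα), one_smul]
  rw [this, vnorm_smul, norm_inv, RCLike.norm_conj, mul_right_comm,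
    inv_mul_cancel₀ (norm_ne_zero_iff.2 hα), one_mul]

/-- The constants `28` and `225 / 49` come from `δ ≤ 1/15` through `‖α‖ ≥ 7/15`. -/
theorem rankOne_remainder_estimates (hd : 0 < d) (hh0 : vnorm h0 = √d) (hx0 : vnorm x0 = √d)
    (hxi : vnorm xi ≤ 2 * √d) (hr : frob (rankOne hi xi - rankOne h0 x0) ≤ d / 15)
    (hα : α = vinner h0 hi / d) :
    α ≠ 0 ∧
      frob (rankOne (hi - α • h0) (xi - (conj α)⁻¹ • x0)) ≤
        frob (rankOne hi xi - rankOne h0 x0) / 28 ∧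
      vnormSq (xi - (conj α)⁻¹ • x0) * d ≤ 225 / 49 * frobSq (rankOne hi xi - rankOne h0 x0) := by
  set r := frob (rankOne hi xi - rankOne h0 x0)
  set w := conj α • xi - x0
  have hδ : 0 < √d := Real.sqrt_pos.2 hd
  have hδsq : √d ^ 2 = d := Real.sq_sqrt hd.le
  have hpyth : (vnorm (hi - α • h0) * vnorm xi) ^ 2 + (√d * vnorm w) ^ 2 = r ^ 2 := by
    rw [mul_pow, mul_pow, vnorm_sq, vnorm_sq, vnorm_sq, hδsq, frob_sq,
      frobSq_rankOne_sub_rankOne (by rw [← vnorm_sq, hh0, hδsq]) hd.ne' hα]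
  have hr0 : 0 ≤ r := Real.sqrt_nonneg _
  have hw : √d * vnorm w ≤ r :=
    abs_le_of_sq_le_sq' (by nlinarith [sq_nonneg (vnorm (hi - α • h0) * vnorm xi)]) hr0 |>.2
  have hαxi : 14 / 15 * √d ≤ ‖α‖ * vnorm xi := by
    nlinarith [vnorm_le_norm_mul_vnorm_add α xi x0]
  have hα7 : 7 / 15 ≤ ‖α‖ := by nlinarith [norm_nonneg α]
  have hα0 : α ≠ 0 := norm_pos_iff.1 (by linarith)
  have hΔx := vnorm_sub_inv_conj_smul_mul_norm hα0 xi x0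
  refine ⟨hα0, ?_, ?_⟩
  · rw [frob_rankOne]
    set e := vnorm (xi - (conj α)⁻¹ • x0)
    set p := vnorm (hi - α • h0)
    have hamgm : (p * vnorm xi) * (√d * vnorm w) ≤ r ^ 2 / 2 := by
      nlinarith [sq_nonneg (p * vnorm xi - √d * vnorm w)]
    have hpe : 0 ≤ p * e := mul_nonneg (vnorm_nonneg _) (vnorm_nonneg _)
    have : p * e * (14 / 15 * d) ≤ r * d / 30 := calc
      p * e * (14 / 15 * d) = p * e * (14 / 15 * √d) * √d := by
        linear_combination (-(14 / 15) * p * e) * hδsq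
      _ ≤ p * e * (‖α‖ * vnorm xi) * √d := by gcongr
      _ = (p * vnorm xi) * (√d * vnorm w) := by rw [← hΔx]; ring
      _ ≤ r ^ 2 / 2 := hamgm
      _ ≤ r * d / 30 := by nlinarith
    nlinarith
  · have : 7 / 15 * (vnorm (xi - (conj α)⁻¹ • x0) * √d) ≤ r := calc
      7 / 15 * (vnorm (xi - (conj α)⁻¹ • x0) * √d)
          ≤ ‖α‖ * (vnorm (xi - (conj α)⁻¹ • x0) * √d) := by
            gcongr; exact mul_nonneg (vnorm_nonneg _) hδ.le
      _ = √d * vnorm w := by rw [← hΔx]; ring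
      _ ≤ r := hw
    rw [← vnorm_sq, ← frob_sq, ← hδsq]
    nlinarith [mul_nonneg (vnorm_nonneg (xi - (conj α)⁻¹ • x0)) hδ.le]

end Block

lemma norm_vinner_div_le_two {n : ℕ} {d : ℝ} {u v : Fin n → ℂ} (hd : 0 < d) (hu : vnorm u = √d)
    (hv : vnorm v ≤ 2 * √d) : ‖vinner u v / (d : ℂ)‖ ≤ 2 := by
  rw [norm_div, Complex.norm_real, Real.norm_of_nonneg hd.le, div_le_iff₀ hd]
  calc ‖vinner u v‖ ≤ vnorm u * vnorm v := norm_vinner_le u v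
    _ ≤ √d * (2 * √d) := by rw [hu]; gcongr
    _ = 2 * d := by rw [mul_left_comm, Real.mul_self_sqrt hd.le]

lemma natCast_mul_norm_vinner_sub_smul_sq_le {n L : ℕ} {b u v : Fin n → ℂ} {α : ℂ} {d μ : ℝ}
    (hd : 0 ≤ d) (hu : √L * ‖vinner b u‖ ≤ 4 * √d * μ) (hv : √L * ‖vinner b v‖ ≤ μ * √d)
    (hα : ‖α‖ ≤ 2) : L * ‖vinner b (u - α • v)‖ ^ 2 ≤ 36 * μ ^ 2 * d := by
  have htri : ‖vinner b (u - α • v)‖ ≤ ‖vinner b u‖ + ‖α‖ * ‖vinner b v‖ := by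
    rw [vinner_sub_smul, ← norm_mul]; exact norm_sub_le _ _
  have hαv : √L * (‖α‖ * ‖vinner b v‖) ≤ 2 * (μ * √d) := by
    rw [mul_left_comm]; gcongr
  have hle : √L * ‖vinner b (u - α • v)‖ ≤ 6 * μ * √d := by
    nlinarith [mul_le_mul_of_nonneg_left htri (Real.sqrt_nonneg L)]
  have hsq := pow_le_pow_left₀ (by positivity) hle 2
  rw [mul_pow, mul_pow, mul_pow, Real.sq_sqrt (Nat.cast_nonneg L), Real.sq_sqrt hd] at hsq
  linarith

section Families

variable {K N L s : ℕ}

lemma famFrobSq_le_of_frob_le {V Z : Fin s → Matrix (Fin K) (Fin N) ℂ} {c : ℝ}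
    (h : ∀ i, frob (V i) ≤ c * frob (Z i)) : famFrobSq V ≤ c ^ 2 * famFrobSq Z := by
  rw [famFrobSq, famFrobSq, Finset.mul_sum]
  refine Finset.sum_le_sum fun i _ => ?_
  rw [← frob_sq, ← frob_sq, ← mul_pow]
  exact pow_le_pow_left₀ (Real.sqrt_nonneg _) (h i) 2

lemma sigmaMaxSq_le {b : Fin L → Fin K → ℂ} {u : Fin s → Fin K → ℂ} {v : Fin s → Fin N → ℂ}
    {Z : Fin s → Matrix (Fin K) (Fin N) ℂ} {d : Fin s → ℝ} {A B : ℝ} (hd : ∀ i, 0 < d i)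
    (hA : 0 ≤ A) (hB : 0 ≤ B) (hu : ∀ i l, L * ‖vinner (b l) (u i)‖ ^ 2 ≤ A * d i)
    (hv : ∀ i, vnormSq (v i) * d i ≤ B * frobSq (Z i)) :
    sigmaMaxSq b u v ≤ A * B * famFrobSq Z / L := by
  refine Real.iSup_le (fun l => ?_) (by have := famFrobSq_nonneg Z; positivity)
  have hL : (0 : ℝ) < L := by exact_mod_cast l.pos
  rw [famFrobSq, Finset.mul_sum, Finset.sum_div]
  refine Finset.sum_le_sum fun i _ => ?_
  rw [le_div_iff₀ hL]
  have hprod := mul_le_mul (hu i l) (hv i) (mul_nonneg (vnormSq_nonneg _) (hd i).le)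
    (mul_nonneg hA (hd i).le)
  refine le_of_mul_le_mul_right ?_ (hd i)
  linarith

lemma mul_log_le_two_mul_of_mul_log_sq_le {Q c : ℝ} (hQ : 0 ≤ Q)
    (h : Q * Real.log L ^ 2 ≤ c) : Q * Real.log L ≤ 2 * c := by
  rcases Nat.lt_or_ge L 2 with hL | hL
  · have : Real.log L = 0 := by interval_cases L <;> simp
    rw [this] at h ⊢
    linarith
  · have hlog : 1 / 2 ≤ Real.log L := by
      have := Real.log_le_log (by norm_num) (show (2 : ℝ) ≤ L by exact_mod_cast hL)
      linarith [Real.log_two_gt_d9]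
    nlinarith [mul_le_mul_of_nonneg_left hlog (mul_nonneg hQ (by linarith : 0 ≤ Real.log L))]

lemma vnormSq_calA_Hmap_le {b : Fin L → Fin K → ℂ} {a : Fin s → Fin L → Fin N → ℂ}
    (hR1 : RankOneBound b a) {u : Fin s → Fin K → ℂ} {v : Fin s → Fin N → ℂ} {D : ℝ}
    (hF : famFrobSq (Hmap u v) ≤ D / 784)
    (hσ : 8 * s * sigmaMaxSq b u v * ((K : ℝ) + N) * Real.log L ≤ D / 500) :
    vnormSq (calA b a (Hmap u v)) ≤ 3 / 500 * D := by
  set F := famFrobSq (Hmap u v)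
  have hF0 : 0 ≤ F := famFrobSq_nonneg _
  have hsqrt : 2 * √(2 * s * F * sigmaMaxSq b u v * ((K : ℝ) + N) * Real.log L) ≤ D / 500 := by
    have hle : 2 * s * F * sigmaMaxSq b u v * ((K : ℝ) + N) * Real.log L ≤ (D / 1000) ^ 2 := by
      nlinarith [mul_le_mul_of_nonneg_left hσ hF0]
    have := Real.sqrt_le_sqrt hle
    rw [Real.sqrt_sq (by linarith)] at this
    linarith
  linarith [hR1 u v]

lemma eight_mul_sigmaMaxSq_mul_log_le {b : Fin L → Fin K → ℂ} {u : Fin s → Fin K → ℂ}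
    {v : Fin s → Fin N → ℂ} {μ D : ℝ} (hD : 0 ≤ D)
    (hσ : sigmaMaxSq b u v ≤ 8100 / 49 * μ ^ 2 * D / L)
    (hC : 10 ^ 7 * μ ^ 2 * s * ((K : ℝ) + N) * Real.log L ^ 2 ≤ L) :
    8 * s * sigmaMaxSq b u v * ((K : ℝ) + N) * Real.log L ≤ D / 500 := by
  rcases Nat.eq_zero_or_pos L with rfl | hL
  · rw [Nat.cast_zero, Real.log_zero, mul_zero]; positivity
  have hL' : (0 : ℝ) < L := by exact_mod_cast hL
  have hlog := Real.log_natCast_nonneg L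
  have hQ : μ ^ 2 * s * ((K : ℝ) + N) * Real.log L ≤ 2 * (L / 10 ^ 7) :=
    mul_log_le_two_mul_of_mul_log_sq_le (by positivity) (by linarith)
  calc 8 * s * sigmaMaxSq b u v * ((K : ℝ) + N) * Real.log L
      = 8 * s * ((K : ℝ) + N) * Real.log L * sigmaMaxSq b u v := by ring
    _ ≤ 8 * s * ((K : ℝ) + N) * Real.log L * (8100 / 49 * μ ^ 2 * D / L) := by gcongr
    _ = 64800 / 49 * (μ ^ 2 * s * ((K : ℝ) + N) * Real.log L) * D / L := by ring
    _ ≤ 64800 / 49 * (2 * (L / 10 ^ 7)) * D / L := by gcongr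
    _ ≤ D / 500 := by rw [div_le_div_iff₀ hL' (by norm_num)]; nlinarith

lemma perturbed_isometry_bounds {aZ aU aV fZ fU fV : ℝ} (haU : 0 ≤ aU) (haV : 0 ≤ aV)
    (hfZ : 0 ≤ fZ) (haZ : aZ ≤ aU + aV) (haU' : aU ≤ aZ + aV) (hfZU : fZ ≤ fU + fV)
    (hfUZ : fU ≤ fZ + fV) (hV : fV ^ 2 ≤ fZ ^ 2 / 784) (hAV : aV ^ 2 ≤ 3 / 500 * fZ ^ 2)
    (hU : |aU ^ 2 - fU ^ 2| ≤ 1 / 10 * fU ^ 2) :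
    2 / 3 * fZ ^ 2 ≤ aZ ^ 2 ∧ aZ ^ 2 ≤ 3 / 2 * fZ ^ 2 := by
  obtain ⟨hU1, hU2⟩ := abs_le.1 hU
  have hfV' : fV ≤ fZ / 28 := by nlinarith
  have hfU1 : 27 / 28 * fZ ≤ fU := by linarith
  have hfU2 : fU ≤ 29 / 28 * fZ := by linarith
  have hAM : 2 * aU * aV ≤ aU ^ 2 / 14 + 14 * aV ^ 2 := by nlinarith [sq_nonneg (aU - 14 * aV)]
  constructor
  · have h1 : 9 / 10 * (27 / 28 * fZ) ^ 2 ≤ aU ^ 2 := by nlinarith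
    have h2 : aU ^ 2 ≤ aZ ^ 2 + 2 * aZ * aV + aV ^ 2 := by nlinarith
    have h3 : aZ * aV ≤ aU * aV + aV ^ 2 := by nlinarith
    nlinarith
  · have h1 : aU ^ 2 ≤ 11 / 10 * (29 / 28 * fZ) ^ 2 := by nlinarith
    have h2 : aZ ^ 2 ≤ aU ^ 2 + 2 * aU * aV + aV ^ 2 := by nlinarith
    nlinarith

lemma rip_of_tangent_add_small {b : Fin L → Fin K → ℂ} {a : Fin s → Fin L → Fin N → ℂ}
    {Z V : Fin s → Matrix (Fin K) (Fin N) ℂ}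
    (hU : |vnormSq (calA b a (Z - V)) - famFrobSq (Z - V)| ≤ 1 / 10 * famFrobSq (Z - V))
    (hV : famFrobSq V ≤ famFrobSq Z / 784) (hAV : vnormSq (calA b a V) ≤ 3 / 500 * famFrobSq Z) :
    2 / 3 * famFrobSq Z ≤ vnormSq (calA b a Z) ∧ vnormSq (calA b a Z) ≤ 3 / 2 * famFrobSq Z := by
  have hA : calA b a Z = calA b a (Z - V) + calA b a V := by rw [← calA_add, sub_add_cancel]
  simp only [← vnorm_sq, ← famFrob_sq] at hU hV hAV ⊢
  refine perturbed_isometry_bounds (vnorm_nonneg _) (vnorm_nonneg _) (Real.sqrt_nonneg _)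
    (hA ▸ vnorm_add_le _ _) ?_ ?_ ?_ hV hAV hU
  · simpa [eq_sub_of_add_eq hA.symm] using vnorm_sub_le (calA b a Z) (calA b a V)
  · simpa using famFrob_add_le (Z - V) V
  · exact famFrob_sub_le Z V

end Families

/-- the local restricted isometry property. -/
theorem statement10 :
    ∃ C : ℝ, 0 < C ∧
      ∀ (K N L s : ℕ), 0 < K → 0 < N → 0 < L → 0 < s →
      ∀ b : Fin L → Fin K → ℂ, BtBeqI b → (∀ l, vnormSq (b l) = (K : ℝ) / L) →
      ∀ (a : Fin s → Fin L → Fin N → ℂ)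
        (h0 : Fin s → Fin K → ℂ) (x0 : Fin s → Fin N → ℂ) (d0 : Fin s → ℝ),
        (∀ i, 0 < d0 i) → (∀ i, vnorm (h0 i) = Real.sqrt (d0 i)) →
        (∀ i, vnorm (x0 i) = Real.sqrt (d0 i)) →
      ∀ μ ε : ℝ, 0 < μ → muhLe b h0 μ → 0 < ε → ε ≤ 1 / 15 →
        C * μ ^ 2 * (s : ℝ) * ((K : ℝ) + (N : ℝ)) * Real.log L ^ 2 ≤ (L : ℝ) →
      ∀ P : Fin s → Matrix (Fin K) (Fin N) ℂ → Matrix (Fin K) (Fin N) ℂ,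
        (∀ i, IsFrobProj (h0 i) (x0 i) (P i)) →
        (∀ Z : Fin s → Matrix (Fin K) (Fin N) ℂ,
          |vnormSq (calA b a fun i => P i (Z i)) - famFrobSq (fun i => P i (Z i))|
            ≤ 1 / 10 * famFrobSq Z) →
      RankOneBound b a →
      ∀ (h : Fin s → Fin K → ℂ) (x : Fin s → Fin N → ℂ),
        inNd d0 h x → inNmu b d0 μ h → inNeps h0 x0 d0 ε h x →
          2 / 3 * famFrobSq (fun i => Hmap h x i - Hmap h0 x0 i)
              ≤ vnormSq (calA b a fun i => Hmap h x i - Hmap h0 x0 i)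
          ∧ vnormSq (calA b a fun i => Hmap h x i - Hmap h0 x0 i)
              ≤ 3 / 2 * famFrobSq (fun i => Hmap h x i - Hmap h0 x0 i) := by
  refine ⟨10 ^ 7, by norm_num, ?_⟩
  intro K N L s _ _ _ _ b _ _ a h0 x0 d0 hd0 hh0 hx0 μ ε _ hμh _ hε hC P hP hRIP hR1 h x hNd hNμ hNε
  set Z : Fin s → Matrix (Fin K) (Fin N) ℂ := fun i => Hmap h x i - Hmap h0 x0 i
  set α := alpha1 h0 d0 h
  set Δh : Fin s → Fin K → ℂ := fun i => h i - α i • h0 i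
  set Δx : Fin s → Fin N → ℂ := fun i => x i - (conj (α i))⁻¹ • x0 i
  have hZ i : frob (Z i) ≤ d0 i / 15 :=
    ((div_le_iff₀ (hd0 i)).1 ((hNε i).trans hε)).trans_eq (by ring)
  have hblock i : α i ≠ 0 ∧ frob (Hmap Δh Δx i) ≤ frob (Z i) / 28 ∧
      vnormSq (Δx i) * d0 i ≤ 225 / 49 * frobSq (Z i) :=
    rankOne_remainder_estimates (hd0 i) (hh0 i) (hx0 i) (hNd i).2 (hZ i) rfl
  have hV : famFrobSq (Hmap Δh Δx) ≤ famFrobSq Z / 784 :=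
    (famFrobSq_le_of_frob_le fun i => (hblock i).2.1.trans_eq (div_eq_inv_mul _ _)).trans_eq
      (by ring)
  have hσ : sigmaMaxSq b Δh Δx ≤ 8100 / 49 * μ ^ 2 * famFrobSq Z / L := by
    refine (sigmaMaxSq_le (A := 36 * μ ^ 2) hd0 (by positivity) (by norm_num) (fun i l => ?_)
      fun i => (hblock i).2.2).trans_eq (by ring)
    refine natCast_mul_norm_vinner_sub_smul_sq_le (hd0 i).le (hNμ i l) ?_
      (norm_vinner_div_le_two (hd0 i) (hh0 i) (hNd i).1)
    simpa only [hh0 i] using hμh i l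
  have hAV := vnormSq_calA_Hmap_le hR1 hV
    (eight_mul_sigmaMaxSq_mul_log_le (famFrobSq_nonneg Z) hσ hC)
  have hU : (fun i => P i ((Z - Hmap Δh Δx) i)) = Z - Hmap Δh Δx :=
    funext fun i => (hP i).apply_of_mem (rankOne_sub_rankOne_sub_mem_Tspace (hblock i).1)
  have := hRIP (Z - Hmap Δh Δx)
  rw [hU] at this
  exact rip_of_tangent_add_small this hV hAV

end RGD
end
end

section
/- Let h, h_0 ∈ ℂ^K and x, x_0 ∈ ℂ^N with ‖h_0‖ = ‖x_0‖ = √d_0 > 0. Set α_1 = ⟨h_0,h⟩/d_0, α_2 = ⟨x_0,x⟩/d_0 (inner products conjugate-linear in the first argument), h̃ = h − α_1 h_0, x̃ = x − α_2 x_0, and δ = ‖h x* − h_0 x_0*‖_F/d_0, and assume δ < 1. Then: |α_1| ≤ ‖h‖/‖h_0‖; |α_1·conj(α_2) − 1| ≤ δ; ‖h̃‖ ≤ (δ/(1−δ))‖h‖; ‖x̃‖ ≤ (δ/(1−δ))‖x‖; and ‖h̃‖·‖x̃‖ ≤ δ²·d_0/(2(1−δ)). Moreover, for any matrix B ∈ ℂ^{L×K}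 and μ > 0, if ‖h‖ ≤ 2√d_0, √L‖Bh‖_∞ ≤ 4μ√d_0 and √L‖Bh_0‖_∞ ≤ μ√d_0, then √L‖Bh̃‖_∞ ≤ 6μ√d_0. -/
noncomputable section
open Finset ComplexConjugate

namespace RGD

/-!
Write `h = α₁ h₀ + h̃` and `x = α₂ x₀ + x̃` with `h̃ ⊥ h₀` and `x̃ ⊥ x₀`. Then
`h x* - h₀ x₀* = h̃ x̃* + ᾱ₂ h̃ x₀* + α₁ h₀ x̃* + (α₁ ᾱ₂ - 1) h₀ x₀*` is a sum of four mutually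
orthogonal rank-one matrices, so `δ² d₀²` is the sum of their squared norms, and everything else is
real arithmetic. The last term gives `|α₁ ᾱ₂ - 1| ≤ δ`, hence `|α₁| |α₂| ≥ 1 - δ` and
`‖h‖ ‖x‖ ≥ (1 - δ) d₀`; the first two give `‖h̃‖ ‖x‖ ≤ δ d₀`, and dividing gives the bound on
`‖h̃‖`. The two middle terms, by AM-GM, control `2 |α₁| |α₂| ‖h̃‖ ‖x̃‖ d₀` and give the product bound.
-/

open scoped InnerProductSpace

section RealInequalities

/- In the applications `a = ‖h̃‖`, `b = ‖x̃‖`, `p = |α|`, `q = |β|`, `c = |α β̄ - 1|`,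
`H = ‖h‖`, `X = ‖x‖`, and `hδ` is the expansion (proved below) of `(δ d)² = ‖h x* - h₀ x₀*‖²`. -/

variable {a b p q c δ d H X : ℝ}

theorem le_of_sq_eq_expansion (hd : 0 < d) (hδ₀ : 0 ≤ δ) (hc : 0 ≤ c)
    (hδ : (δ * d) ^ 2 = a ^ 2 * b ^ 2 + q ^ 2 * a ^ 2 * d + p ^ 2 * b ^ 2 * d + c ^ 2 * d ^ 2) :
    c ≤ δ := by
  have : (c * d) ^ 2 ≤ (δ * d) ^ 2 := by
    rw [hδ]
    nlinarith [sq_nonneg (a * b), sq_nonneg (q * a), sq_nonneg (p * b)]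
  exact le_of_mul_le_mul_right ((sq_le_sq₀ (by positivity) (by positivity)).1 this) hd

theorem mul_le_of_sq_eq_expansion (hd : 0 < d) (hδ₀ : 0 ≤ δ) (ha : 0 ≤ a) (hX₀ : 0 ≤ X)
    (hX : X ^ 2 = b ^ 2 + q ^ 2 * d)
    (hδ : (δ * d) ^ 2 = a ^ 2 * b ^ 2 + q ^ 2 * a ^ 2 * d + p ^ 2 * b ^ 2 * d + c ^ 2 * d ^ 2) :
    a * X ≤ δ * d := by
  refine (sq_le_sq₀ (by positivity) (by positivity)).1 ?_
  rw [hδ, mul_pow, hX]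
  nlinarith [sq_nonneg (p * b), sq_nonneg (c * d)]

theorem sub_mul_le_mul_of_sq_eq (hd : 0 < d) (hδ₁ : δ ≤ 1) (hH₀ : 0 ≤ H) (hX₀ : 0 ≤ X)
    (hH : H ^ 2 = a ^ 2 + p ^ 2 * d) (hX : X ^ 2 = b ^ 2 + q ^ 2 * d) (hpq : 1 - δ ≤ p * q) :
    (1 - δ) * d ≤ H * X := by
  refine (sq_le_sq₀ (by nlinarith) (by positivity)).1 ?_
  have h1 : ((1 - δ) * d) ^ 2 ≤ (p * q * d) ^ 2 := by
    rw [mul_pow, mul_pow _ d]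
    gcongr
  have h2 : (p * q * d) ^ 2 ≤ (H * X) ^ 2 := by
    rw [mul_pow H, hH, hX]
    nlinarith [sq_nonneg (a * b), sq_nonneg (a * q), sq_nonneg (p * b), hd.le]
  exact h1.trans h2

theorem le_div_mul_of_sq_eq_expansion (hd : 0 < d) (hδ₀ : 0 ≤ δ) (hδ₁ : δ < 1) (ha : 0 ≤ a)
    (hH₀ : 0 ≤ H) (hX₀ : 0 ≤ X) (hH : H ^ 2 = a ^ 2 + p ^ 2 * d) (hX : X ^ 2 = b ^ 2 + q ^ 2 * d)
    (hpq : 1 - δ ≤ p * q)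
    (hδ : (δ * d) ^ 2 = a ^ 2 * b ^ 2 + q ^ 2 * a ^ 2 * d + p ^ 2 * b ^ 2 * d + c ^ 2 * d ^ 2) :
    a ≤ δ / (1 - δ) * H := by
  have key : a * (1 - δ) * d ≤ δ * H * d :=
    calc a * (1 - δ) * d = a * ((1 - δ) * d) := by ring
      _ ≤ a * (H * X) :=
        mul_le_mul_of_nonneg_left (sub_mul_le_mul_of_sq_eq hd hδ₁.le hH₀ hX₀ hH hX hpq) ha
      _ = H * (a * X) := by ring
      _ ≤ H * (δ * d) :=
        mul_le_mul_of_nonneg_left (mul_le_of_sq_eq_expansion hd hδ₀ ha hX₀ hX hδ) hH₀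
      _ = δ * H * d := by ring
  rw [div_mul_eq_mul_div, le_div_iff₀ (by linarith)]
  exact le_of_mul_le_mul_right key hd

theorem mul_le_div_of_sq_eq_expansion (hd : 0 < d) (hδ₁ : δ < 1) (ha : 0 ≤ a) (hb : 0 ≤ b)
    (hpq : 1 - δ ≤ p * q)
    (hδ : (δ * d) ^ 2 = a ^ 2 * b ^ 2 + q ^ 2 * a ^ 2 * d + p ^ 2 * b ^ 2 * d + c ^ 2 * d ^ 2) :
    a * b ≤ δ ^ 2 * d / (2 * (1 - δ)) := by
  have amgm : 2 * (p * q) * (a * b) * d ≤ q ^ 2 * a ^ 2 * d + p ^ 2 * b ^ 2 * d := by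
    nlinarith [mul_nonneg hd.le (sq_nonneg (q * a - p * b))]
  have key : 2 * (1 - δ) * (a * b) * d ≤ δ ^ 2 * d * d := by
    nlinarith [mul_le_mul_of_nonneg_right hpq (mul_nonneg (mul_nonneg ha hb) hd.le),
      sq_nonneg (a * b), sq_nonneg (c * d)]
  rw [le_div_iff₀ (by linarith), mul_comm (a * b)]
  exact le_of_mul_le_mul_right key hd

end RealInequalities

section InnerProductSpace

variable {𝕜 E F : Type*} [RCLike 𝕜] [NormedAddCommGroup E] [InnerProductSpace 𝕜 E]
  [NormedAddCommGroup F] [InnerProductSpace 𝕜 F]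

theorem norm_sq_eq_norm_sub_smul_sq_add {u₀ u : E} {α : 𝕜} (hα : ⟪u₀, u⟫_𝕜 = α * (‖u₀‖ ^ 2 : ℝ)) :
    ‖u‖ ^ 2 = ‖u - α • u₀‖ ^ 2 + ‖α‖ ^ 2 * ‖u₀‖ ^ 2 := by
  have hre : RCLike.re ⟪u, α • u₀⟫_𝕜 = ‖α‖ ^ 2 * ‖u₀‖ ^ 2 := by
    rw [inner_smul_right, ← inner_conj_symm, hα, map_mul (starRingEnd 𝕜), RCLike.conj_ofReal,
      ← mul_assoc, RCLike.mul_conj, ← RCLike.ofReal_pow, ← RCLike.ofReal_mul, RCLike.ofReal_re]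
  rw [@norm_sub_sq 𝕜, hre, norm_smul, mul_pow]
  ring

theorem norm_mul_conj_sub_one_sq (a b : 𝕜) :
    ‖a * conj b - 1‖ ^ 2 = ‖a‖ ^ 2 * ‖b‖ ^ 2 - 2 * RCLike.re (a * conj b) + 1 := by
  rw [@norm_sub_sq 𝕜, RCLike.inner_apply, norm_mul, RCLike.norm_conj, norm_one]
  simp [mul_pow]

theorem norm_le_div_norm_of_inner_eq {u₀ u : E} {α : 𝕜} (hu₀ : u₀ ≠ 0)
    (hα : ⟪u₀, u⟫_𝕜 = α * (‖u₀‖ ^ 2 : ℝ)) : ‖α‖ ≤ ‖u‖ / ‖u₀‖ := by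
  have hsq : (‖α‖ * ‖u₀‖) ^ 2 ≤ ‖u‖ ^ 2 := by
    rw [norm_sq_eq_norm_sub_smul_sq_add hα, mul_pow]
    linarith [sq_nonneg ‖u - α • u₀‖]
  rw [le_div_iff₀ (norm_pos_iff.2 hu₀)]
  exact (sq_le_sq₀ (by positivity) (norm_nonneg u)).1 hsq

/-- The left side is `‖h x* - h₀ x₀*‖²`. -/
theorem norm_sq_mul_norm_sq_sub_re_add_eq {h₀ h : E} {x₀ x : F} {α β : 𝕜} {d : ℝ}
    (hh₀ : ‖h₀‖ ^ 2 = d) (hx₀ : ‖x₀‖ ^ 2 = d)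
    (hα : ⟪h₀, h⟫_𝕜 = α * d) (hβ : ⟪x₀, x⟫_𝕜 = β * d) :
    ‖h‖ ^ 2 * ‖x‖ ^ 2 - 2 * RCLike.re (⟪h₀, h⟫_𝕜 * conj ⟪x₀, x⟫_𝕜) + d ^ 2
      = ‖h - α • h₀‖ ^ 2 * ‖x - β • x₀‖ ^ 2 + ‖β‖ ^ 2 * ‖h - α • h₀‖ ^ 2 * d
        + ‖α‖ ^ 2 * ‖x - β • x₀‖ ^ 2 * d + ‖α * conj β - 1‖ ^ 2 * d ^ 2 := by
  have hre : RCLike.re (⟪h₀, h⟫_𝕜 * conj ⟪x₀, x⟫_𝕜) = RCLike.re (α * conj β) * d ^ 2 := by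
    rw [hα, hβ, map_mul (starRingEnd 𝕜), RCLike.conj_ofReal, ← RCLike.re_mul_ofReal]
    push_cast
    ring_nf
  have hα' : ⟪h₀, h⟫_𝕜 = α * (‖h₀‖ ^ 2 : ℝ) := hh₀ ▸ hα
  have hβ' : ⟪x₀, x⟫_𝕜 = β * (‖x₀‖ ^ 2 : ℝ) := hx₀ ▸ hβ
  rw [norm_sq_eq_norm_sub_smul_sq_add hα', norm_sq_eq_norm_sub_smul_sq_add hβ', hre,
    norm_mul_conj_sub_one_sq, hh₀, hx₀]
  ring

theorem rankOne_perturbation_bounds {h₀ h : E} {x₀ x : F} {α β : 𝕜} {d δ : ℝ} (hd : 0 < d)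
    (hh₀ : ‖h₀‖ ^ 2 = d) (hx₀ : ‖x₀‖ ^ 2 = d) (hα : ⟪h₀, h⟫_𝕜 = α * d) (hβ : ⟪x₀, x⟫_𝕜 = β * d)
    (hδ₀ : 0 ≤ δ) (hδ₁ : δ < 1)
    (hδ : (δ * d) ^ 2 = ‖h‖ ^ 2 * ‖x‖ ^ 2 - 2 * RCLike.re (⟪h₀, h⟫_𝕜 * conj ⟪x₀, x⟫_𝕜) + d ^ 2) :
    ‖α‖ ≤ ‖h‖ / ‖h₀‖
    ∧ ‖α * conj β - 1‖ ≤ δ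
    ∧ ‖h - α • h₀‖ ≤ δ / (1 - δ) * ‖h‖
    ∧ ‖x - β • x₀‖ ≤ δ / (1 - δ) * ‖x‖
    ∧ ‖h - α • h₀‖ * ‖x - β • x₀‖ ≤ δ ^ 2 * d / (2 * (1 - δ)) := by
  have hα' : ⟪h₀, h⟫_𝕜 = α * (‖h₀‖ ^ 2 : ℝ) := hh₀ ▸ hα
  have hβ' : ⟪x₀, x⟫_𝕜 = β * (‖x₀‖ ^ 2 : ℝ) := hx₀ ▸ hβ
  have hH := norm_sq_eq_norm_sub_smul_sq_add hα'
  have hX := norm_sq_eq_norm_sub_smul_sq_add hβ'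
  rw [hh₀] at hH
  rw [hx₀] at hX
  rw [norm_sq_mul_norm_sq_sub_re_add_eq hh₀ hx₀ hα hβ] at hδ
  have hc : ‖α * conj β - 1‖ ≤ δ := le_of_sq_eq_expansion hd hδ₀ (norm_nonneg _) hδ
  have hpq : 1 - δ ≤ ‖α‖ * ‖β‖ := by
    have := norm_sub_norm_le (1 : 𝕜) (α * conj β)
    rw [norm_one, norm_mul, RCLike.norm_conj, norm_sub_rev] at this
    linarith
  have hh₀_ne : h₀ ≠ 0 := by
    rintro rfl
    simp only [norm_zero] at hh₀
    linarith [hh₀]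
  refine ⟨norm_le_div_norm_of_inner_eq hh₀_ne hα', hc,
    le_div_mul_of_sq_eq_expansion hd hδ₀ hδ₁ (norm_nonneg _) (norm_nonneg _) (norm_nonneg _) hH hX
      hpq hδ,
    le_div_mul_of_sq_eq_expansion (c := ‖α * conj β - 1‖) hd hδ₀ hδ₁ (norm_nonneg _)
      (norm_nonneg _) (norm_nonneg _) hX hH (by linarith) (by linear_combination hδ),
    mul_le_div_of_sq_eq_expansion hd hδ₁ (norm_nonneg _) (norm_nonneg _) hpq hδ⟩

end InnerProductSpace

theorem frobSq_rankOne_sub_rankOne_s17 {K N : ℕ} (u u' : Fin K → ℂ) (v v' : Fin N → ℂ) :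
    frobSq (rankOne u v - rankOne u' v')
      = vnormSq u * vnormSq v - 2 * (vinner u' u * conj (vinner v' v)).re
        + vnormSq u' * vnormSq v' := by
  have entry : ∀ k j, ‖u k * conj (v j) - u' k * conj (v' j)‖ ^ 2
      = ‖u k‖ ^ 2 * ‖v j‖ ^ 2 - 2 * ((conj (u' k) * u k) * conj (conj (v' j) * v j)).re
        + ‖u' k‖ ^ 2 * ‖v' j‖ ^ 2 := by
    intro k j
    rw [← Complex.normSq_eq_norm_sq, Complex.normSq_sub]
    simp only [Complex.normSq_eq_norm_sq, Complex.norm_conj, map_mul, Complex.conj_conj]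
    ring_nf
  simp only [frobSq, rankOne, Matrix.sub_apply, Matrix.of_apply, entry, Finset.sum_add_distrib,
    Finset.sum_sub_distrib]
  rw [vnormSq, vnormSq, vnormSq, vnormSq, vinner, vinner, map_sum, Finset.sum_mul_sum,
    Finset.sum_mul_sum, Finset.sum_mul_sum]
  simp only [Complex.re_sum, Finset.mul_sum]

theorem vnorm_eq_norm {n : ℕ} (v : Fin n → ℂ) : vnorm v = ‖WithLp.toLp 2 v‖ := by
  rw [EuclideanSpace.norm_eq]; rfl

theorem vinner_eq_inner {n : ℕ} (u v : Fin n → ℂ) :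
    vinner u v = ⟪WithLp.toLp 2 u, WithLp.toLp 2 v⟫_ℂ := by
  simp [vinner, PiLp.inner_apply, RCLike.inner_apply, mul_comm]

theorem vnormSq_eq_norm_sq {n : ℕ} (v : Fin n → ℂ) : vnormSq v = ‖WithLp.toLp 2 v‖ ^ 2 := by
  rw [EuclideanSpace.norm_eq, Real.sq_sqrt (by positivity)]; rfl

theorem vnorm_sub_smul_eq_norm {n : ℕ} (u v : Fin n → ℂ) (c : ℂ) :
    vnorm (fun k => u k - c * v k) = ‖WithLp.toLp 2 u - c • WithLp.toLp 2 v‖ := by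
  rw [vnorm_eq_norm]; rfl

theorem sq_deltaI_mul {K N : ℕ} (h₀ h : Fin K → ℂ) (x₀ x : Fin N → ℂ) {d : ℝ} (hd : d ≠ 0) :
    (deltaI h₀ x₀ d h x * d) ^ 2 = ‖WithLp.toLp 2 h‖ ^ 2 * ‖WithLp.toLp 2 x‖ ^ 2
      - 2 * RCLike.re (⟪WithLp.toLp 2 h₀, WithLp.toLp 2 h⟫_ℂ
        * conj ⟪WithLp.toLp 2 x₀, WithLp.toLp 2 x⟫_ℂ)
      + ‖WithLp.toLp 2 h₀‖ ^ 2 * ‖WithLp.toLp 2 x₀‖ ^ 2 := by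
  rw [deltaI, div_mul_cancel₀ _ hd, frob, Real.sq_sqrt (by unfold frobSq; positivity),
    frobSq_rankOne_sub_rankOne_s17, vnormSq_eq_norm_sq, vnormSq_eq_norm_sq, vnormSq_eq_norm_sq,
    vnormSq_eq_norm_sq, vinner_eq_inner, vinner_eq_inner, RCLike.re_to_complex]

theorem norm_mulVec_sub_smul_le {R m n : Type*} [NormedCommRing R] [Fintype n]
    (B : Matrix m n R) (u v : n → R) (c : R) (l : m) :
    ‖B.mulVec (fun k => u k - c * v k) l‖ ≤ ‖B.mulVec u l‖ + ‖c‖ * ‖B.mulVec v l‖ := by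
  have : (fun k => u k - c * v k) = u - c • v := rfl
  rw [this, Matrix.mulVec_sub, Matrix.mulVec_smul, Pi.sub_apply, Pi.smul_apply, smul_eq_mul]
  exact (norm_sub_le _ _).trans (add_le_add_right (norm_mul_le _ _) _)

theorem statement17_general
    {K N L : ℕ}
    (h h0 : Fin K → ℂ) (x x0 : Fin N → ℂ) (d0 : ℝ) (hd0 : 0 < d0)
    (hh0 : vnorm h0 = Real.sqrt d0) (hx0 : vnorm x0 = Real.sqrt d0)
    (hδ : deltaI h0 x0 d0 h x < 1) :
    ‖vinner h0 h / ((d0 : ℝ) : ℂ)‖ ≤ vnorm h / vnorm h0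
    ∧ ‖vinner h0 h / ((d0 : ℝ) : ℂ) * conj (vinner x0 x / ((d0 : ℝ) : ℂ)) - 1‖
        ≤ deltaI h0 x0 d0 h x
    ∧ vnorm (fun k => h k - vinner h0 h / ((d0 : ℝ) : ℂ) * h0 k)
        ≤ deltaI h0 x0 d0 h x / (1 - deltaI h0 x0 d0 h x) * vnorm h
    ∧ vnorm (fun j => x j - vinner x0 x / ((d0 : ℝ) : ℂ) * x0 j)
        ≤ deltaI h0 x0 d0 h x / (1 - deltaI h0 x0 d0 h x) * vnorm x
    ∧ vnorm (fun k => h k - vinner h0 h / ((d0 : ℝ) : ℂ) * h0 k)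
        * vnorm (fun j => x j - vinner x0 x / ((d0 : ℝ) : ℂ) * x0 j)
        ≤ deltaI h0 x0 d0 h x ^ 2 * d0 / (2 * (1 - deltaI h0 x0 d0 h x))
    ∧ (∀ (B : Matrix (Fin L) (Fin K) ℂ) (μ : ℝ), 0 < μ →
        vnorm h ≤ 2 * Real.sqrt d0 →
        (∀ l, Real.sqrt L * ‖B.mulVec h l‖ ≤ 4 * μ * Real.sqrt d0) →
        (∀ l, Real.sqrt L * ‖B.mulVec h0 l‖ ≤ μ * Real.sqrt d0) →
        ∀ l, Real.sqrt L *
            ‖B.mulVec (fun k => h k - vinner h0 h / ((d0 : ℝ) : ℂ) * h0 k) l‖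
          ≤ 6 * μ * Real.sqrt d0) := by
  set α := vinner h0 h / ((d0 : ℝ) : ℂ)
  set β := vinner x0 x / ((d0 : ℝ) : ℂ)
  have hd0' : ((d0 : ℝ) : ℂ) ≠ 0 := by exact_mod_cast hd0.ne'
  have hsq : ∀ {n : ℕ} (v : Fin n → ℂ), vnorm v = Real.sqrt d0 → ‖WithLp.toLp 2 v‖ ^ 2 = d0 :=
    fun v hv => by rw [← vnorm_eq_norm, hv, Real.sq_sqrt hd0.le]
  have hexp : (deltaI h0 x0 d0 h x * d0) ^ 2 = ‖WithLp.toLp 2 h‖ ^ 2 * ‖WithLp.toLp 2 x‖ ^ 2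
      - 2 * RCLike.re (⟪WithLp.toLp 2 h0, WithLp.toLp 2 h⟫_ℂ
        * conj ⟪WithLp.toLp 2 x0, WithLp.toLp 2 x⟫_ℂ) + d0 ^ 2 := by
    rw [sq_deltaI_mul h0 h x0 x hd0.ne', hsq h0 hh0, hsq x0 hx0, ← sq]
  obtain ⟨hα, hc, hh, hx, hhx⟩ := rankOne_perturbation_bounds (α := α) (β := β) hd0 (hsq h0 hh0)
    (hsq x0 hx0) (by rw [← vinner_eq_inner]; exact (div_mul_cancel₀ _ hd0').symm)
    (by rw [← vinner_eq_inner]; exact (div_mul_cancel₀ _ hd0').symm)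
    (div_nonneg (Real.sqrt_nonneg _) hd0.le) hδ hexp
  rw [vnorm_sub_smul_eq_norm, vnorm_sub_smul_eq_norm]
  simp only [vnorm_eq_norm]
  refine ⟨hα, hc, hh, hx, hhx, fun B μ _ hhB hBh hBh0 l => ?_⟩
  have hα₂ : ‖α‖ ≤ 2 := by
    rw [← vnorm_eq_norm h0, hh0, le_div_iff₀ (Real.sqrt_pos.2 hd0)] at hα
    exact le_of_mul_le_mul_right (by linarith) (Real.sqrt_pos.2 hd0)
  calc Real.sqrt L * ‖B.mulVec (fun k => h k - α * h0 k) l‖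
      ≤ Real.sqrt L * ‖B.mulVec h l‖ + ‖α‖ * (Real.sqrt L * ‖B.mulVec h0 l‖) := by
        nlinarith [norm_mulVec_sub_smul_le B h h0 α l, Real.sqrt_nonneg (L : ℝ)]
    _ ≤ 4 * μ * Real.sqrt d0 + 2 * (μ * Real.sqrt d0) :=
        add_le_add (hBh l) (mul_le_mul hα₂ (hBh0 l) (by positivity) zero_le_two)
    _ = 6 * μ * Real.sqrt d0 := by ring

/-- rank-one perturbation bounds (Lemma 5.9). -/
theorem statement17
    {K N L : ℕ} (hK : 0 < K) (hN : 0 < N) (hL : 0 < L)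
    (h h0 : Fin K → ℂ) (x x0 : Fin N → ℂ) (d0 : ℝ) (hd0 : 0 < d0)
    (hh0 : vnorm h0 = Real.sqrt d0) (hx0 : vnorm x0 = Real.sqrt d0)
    (hδ : deltaI h0 x0 d0 h x < 1) :
    ‖vinner h0 h / ((d0 : ℝ) : ℂ)‖ ≤ vnorm h / vnorm h0
    ∧ ‖vinner h0 h / ((d0 : ℝ) : ℂ) * conj (vinner x0 x / ((d0 : ℝ) : ℂ)) - 1‖
        ≤ deltaI h0 x0 d0 h x
    ∧ vnorm (fun k => h k - vinner h0 h / ((d0 : ℝ) : ℂ) * h0 k)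
        ≤ deltaI h0 x0 d0 h x / (1 - deltaI h0 x0 d0 h x) * vnorm h
    ∧ vnorm (fun j => x j - vinner x0 x / ((d0 : ℝ) : ℂ) * x0 j)
        ≤ deltaI h0 x0 d0 h x / (1 - deltaI h0 x0 d0 h x) * vnorm x
    ∧ vnorm (fun k => h k - vinner h0 h / ((d0 : ℝ) : ℂ) * h0 k)
        * vnorm (fun j => x j - vinner x0 x / ((d0 : ℝ) : ℂ) * x0 j)
        ≤ deltaI h0 x0 d0 h x ^ 2 * d0 / (2 * (1 - deltaI h0 x0 d0 h x))
    ∧ (∀ (B : Matrix (Fin L) (Fin K) ℂ) (μ : ℝ), 0 < μ →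
        vnorm h ≤ 2 * Real.sqrt d0 →
        (∀ l, Real.sqrt L * ‖B.mulVec h l‖ ≤ 4 * μ * Real.sqrt d0) →
        (∀ l, Real.sqrt L * ‖B.mulVec h0 l‖ ≤ μ * Real.sqrt d0) →
        ∀ l, Real.sqrt L *
            ‖B.mulVec (fun k => h k - vinner h0 h / ((d0 : ℝ) : ℂ) * h0 k) l‖
          ≤ 6 * μ * Real.sqrt d0) :=
  statement17_general h h0 x x0 d0 hd0 hh0 hx0 hδ

end RGD
end
end
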